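/- arXiv:2007.05115 — 6 statements merged into one kernel-verified Lean document; each statement's English description precedes it below -/
import Mathlib

section
/- Let N and T_1,...,T_n be non-negative integers, and for each i in [n] let S_i : {0,...,T_i} → {0,...,N} satisfy: (i) |S_i(t) - S_i(t-1)| = 1 for all t in [T_i]; (ii) 0 ≤ S_i(t) < N for all 0 ≤ t < T_i; (iii) S_i(0) = 0 and S_i(T_i) = N. Then there exists T ∈ ℕ and functions f_i : {0,...,T} → {0,...,T_i} for 1 ≤ i ≤ n such that: (a) |f_i(t) - f_i(t-1)| = 1 for all t in [T]; (b) S_1(f_1(t)) = S_j(f_j(t)) for all t in {0,...,T} and all 1 ≤ j ≤ n; (c) S_1(f_1(0)) = 0 and S_1(f_1(T)) = N. -/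
/-!
For two walks `S₁, S₂`, join two pairs of times `(a, b)`, `(a', b')` with `S₁ a = S₂ b` and
`S₁ a' = S₂ b'` when both times move by one. The degree of `(a, b)` is `u₁ u₂ + d₁ d₂`, where `u`
and `d` count the time-neighbours going up and going down; it is `1` at `(0, 0)` and even at every
other pair below height `N`, while `(T₁, T₂)` is the only pair at height `N`. By the handshake
lemma the component of `(0, 0)` contains another vertex of odd degree, which must be `(T₁, T₂)`;
a path between them synchronises the two walks, and as it meets `(T₁, T₂)` only at its end the
common walk stays below `N` until then. Finitely many walks are synchronised one at a time against
the common walk of the previous ones, composing the reparametrisations.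
-/

open Finset

namespace SimpleGraph

variable {V : Type*} {G : SimpleGraph V}

theorem degree_induce_eq_of_neighborSet_subset [G.LocallyFinite] {s : Set V}
    [(G.induce s).LocallyFinite] {v : s} (h : G.neighborSet v ⊆ s) :
    (G.induce s).degree v = G.degree v := by
  rw [← card_neighborSet_eq_degree, ← card_neighborSet_eq_degree]
  exact Fintype.card_congr
    { toFun := fun w => ⟨w.1.1, w.2⟩
      invFun := fun w => ⟨⟨w.1, h w.2⟩, w.2⟩
      left_inv := fun _ => rfl
      right_inv := fun _ => rfl }

theorem exists_ne_reachable_odd_degree [G.LocallyFinite] (hfin : G.support.Finite) {u : V}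
    (hu : Odd (G.degree u)) : ∃ v ≠ u, G.Reachable u v ∧ Odd (G.degree v) := by
  classical
  set s := {v | G.Reachable u v}
  have hs : s.Finite := hfin.subset fun v (huv : G.Reachable u v) => by
    obtain rfl | hne := eq_or_ne u v
    · exact (degree_pos_iff_mem_support G u).1 hu.pos
    · exact (degree_pos_iff_mem_support G v).1 (huv.degree_pos_right hne)
  have : Fintype s := hs.fintype
  have hclosed (v : s) : G.neighborSet v ⊆ s := fun w hw => v.2.trans (Adj.reachable hw)
  obtain ⟨⟨v, huv⟩, hne, hv⟩ := (G.induce s).exists_ne_odd_degree_of_exists_odd_degree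
    ⟨u, Reachable.refl u⟩ (by rwa [degree_induce_eq_of_neighborSet_subset (hclosed _)])
  rw [degree_induce_eq_of_neighborSet_subset (hclosed _)] at hv
  exact ⟨v, fun h => hne (Subtype.ext h), huv, hv⟩

end SimpleGraph

def UnitSteps (T : ℕ) (f : ℕ → ℕ) : Prop :=
  ∀ t, 1 ≤ t → t ≤ T → f t = f (t - 1) + 1 ∨ f (t - 1) = f t + 1

namespace UnitSteps

variable {T : ℕ} {f : ℕ → ℕ}

theorem add_one_eq_or (hf : UnitSteps T f) {a b : ℕ} (ha : a ≤ T) (hb : b ≤ T)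
    (hab : a + 1 = b ∨ b + 1 = a) : f a + 1 = f b ∨ f b + 1 = f a := by
  rcases hab with rfl | rfl
  · have := hf (a + 1) (by omega) hb
    simp only [Nat.add_sub_cancel] at this
    omega
  · have := hf (b + 1) (by omega) ha
    simp only [Nat.add_sub_cancel] at this
    omega

theorem comp {T' : ℕ} {g : ℕ → ℕ} (hf : UnitSteps T f) (hg : UnitSteps T' g)
    (hgT : ∀ t ≤ T', g t ≤ T) : UnitSteps T' (f ∘ g) := fun t h1 h2 => by
  have := hf.add_one_eq_or (hgT t h2) (hgT (t - 1) (by omega)) (by have := hg t h1 h2; omega)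
  simp only [Function.comp_apply]
  omega

end UnitSteps

structure IsClimb (N T : ℕ) (S : ℕ → ℕ) : Prop where
  steps : UnitSteps T S
  lt : ∀ t < T, S t < N
  zero : S 0 = 0
  last : S T = N

structure IsReparam (T' T : ℕ) (f S H : ℕ → ℕ) : Prop where
  le : ∀ t ≤ T', f t ≤ T
  steps : UnitSteps T' f
  eq : ∀ t ≤ T', S (f t) = H t

theorem IsReparam.comp {T'' T' T : ℕ} {g f S H K : ℕ → ℕ} (hf : IsReparam T' T f S H)
    (hg : IsReparam T'' T' g H K) : IsReparam T'' T (f ∘ g) S K :=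
  ⟨fun t ht => hf.le _ (hg.le t ht), hf.steps.comp hg.steps hg.le,
    fun t ht => (hf.eq _ (hg.le t ht)).trans (hg.eq t ht)⟩

def timeNbrs (T a : ℕ) : Finset ℕ :=
  (range (T + 1)).filter fun x => x + 1 = a ∨ a + 1 = x

def upNbrs (T : ℕ) (S : ℕ → ℕ) (a : ℕ) : Finset ℕ :=
  (timeNbrs T a).filter fun x => S x = S a + 1

def downNbrs (T : ℕ) (S : ℕ → ℕ) (a : ℕ) : Finset ℕ :=
  (timeNbrs T a).filter fun x => S x + 1 = S a

section Neighbours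

variable {N T a : ℕ} {S : ℕ → ℕ}

theorem timeNbrs_zero (hT : 0 < T) : timeNbrs T 0 = {1} := by
  ext x
  simp only [timeNbrs, mem_filter, mem_range, mem_singleton]
  omega

theorem card_timeNbrs_of_pos_of_lt (ha : 0 < a) (haT : a < T) : #(timeNbrs T a) = 2 := by
  have : timeNbrs T a = {a - 1, a + 1} := by
    ext x
    simp only [timeNbrs, mem_filter, mem_range, mem_insert, mem_singleton]
    omega
  rw [this, card_pair (by omega)]

theorem downNbrs_eq_empty (h : S a = 0) : downNbrs T S a = ∅ :=
  filter_false_of_mem fun x _ => by omega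

theorem disjoint_upNbrs_downNbrs : Disjoint (upNbrs T S a) (downNbrs T S a) :=
  disjoint_filter.2 fun x _ h h' => by omega

theorem UnitSteps.card_upNbrs_add_card_downNbrs (hS : UnitSteps T S) (ha : a ≤ T) :
    #(upNbrs T S a) + #(downNbrs T S a) = #(timeNbrs T a) := by
  rw [upNbrs, downNbrs,
    ← card_filter_add_card_filter_not (s := timeNbrs T a) (fun x => S x = S a + 1)]
  congr 2
  refine filter_congr fun x hx => ?_
  simp only [timeNbrs, mem_filter, mem_range] at hx
  have := hS.add_one_eq_or ha (Nat.lt_succ_iff.1 hx.1) (by omega)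
  omega

namespace IsClimb

theorem le (h : IsClimb N T S) {t : ℕ} (ht : t ≤ T) : S t ≤ N := by
  obtain rfl | ht := ht.eq_or_lt
  · exact h.last.le
  · exact (h.lt t ht).le

theorem eq_last_of_eq (h : IsClimb N T S) {t : ℕ} (ht : t ≤ T) (hN : S t = N) : t = T :=
  by_contra fun hne => (h.lt t (ht.lt_of_ne hne)).ne hN

theorem eq_zero_iff (h : IsClimb N T S) : T = 0 ↔ N = 0 := by
  refine ⟨fun hT => ?_, fun hN => (h.eq_last_of_eq (Nat.zero_le T) (h.zero.trans hN.symm)).symm⟩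
  rw [← h.last, hT, h.zero]

theorem card_upNbrs_zero (h : IsClimb N T S) (hT : 0 < T) : #(upNbrs T S 0) = 1 := by
  have := h.steps.card_upNbrs_add_card_downNbrs (Nat.zero_le T)
  rwa [downNbrs_eq_empty h.zero, timeNbrs_zero hT, card_empty, add_zero,
    card_singleton] at this

theorem card_upNbrs_add_card_downNbrs (h : IsClimb N T S) (ha : 0 < a) (haT : a < T) :
    #(upNbrs T S a) + #(downNbrs T S a) = 2 := by
  rw [h.steps.card_upNbrs_add_card_downNbrs haT.le, card_timeNbrs_of_pos_of_lt ha haT]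

end IsClimb

end Neighbours

theorem Nat.even_mul_add_mul_of_add_eq_two {u₁ d₁ u₂ d₂ : ℕ} (h₁ : u₁ + d₁ = 2)
    (h₂ : u₂ + d₂ = 2) : Even (u₁ * u₂ + d₁ * d₂) := by
  have e₁ := Nat.even_add.1 (h₁ ▸ even_two)
  have e₂ := Nat.even_add.1 (h₂ ▸ even_two)
  rw [Nat.even_add, Nat.even_mul, Nat.even_mul]
  tauto

def matchedPairs (T₁ T₂ : ℕ) (S₁ S₂ : ℕ → ℕ) : Set (ℕ × ℕ) :=
  {p | p.1 ≤ T₁ ∧ p.2 ≤ T₂ ∧ S₁ p.1 = S₂ p.2}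

/-- Walks in this graph from `(0, 0)` to `(T₁, T₂)` are synchronisations of `S₁` and `S₂`. -/
def syncGraph (T₁ T₂ : ℕ) (S₁ S₂ : ℕ → ℕ) : SimpleGraph (ℕ × ℕ) where
  Adj p q := p ∈ matchedPairs T₁ T₂ S₁ S₂ ∧ q ∈ matchedPairs T₁ T₂ S₁ S₂ ∧
    (p.1 + 1 = q.1 ∨ q.1 + 1 = p.1) ∧ (p.2 + 1 = q.2 ∨ q.2 + 1 = p.2)
  symm := ⟨fun _ _ ⟨hp, hq, h₁, h₂⟩ => ⟨hq, hp, h₁.symm, h₂.symm⟩⟩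
  loopless := ⟨fun _ ⟨_, _, h, _⟩ => by omega⟩

section SyncGraph

variable {N T₁ T₂ : ℕ} {S₁ S₂ : ℕ → ℕ}

theorem syncGraph_adj {p q : ℕ × ℕ} :
    (syncGraph T₁ T₂ S₁ S₂).Adj p q ↔ p ∈ matchedPairs T₁ T₂ S₁ S₂ ∧
      q ∈ matchedPairs T₁ T₂ S₁ S₂ ∧
      (p.1 + 1 = q.1 ∨ q.1 + 1 = p.1) ∧ (p.2 + 1 = q.2 ∨ q.2 + 1 = p.2) :=
  Iff.rfl

theorem matchedPairs_finite : (matchedPairs T₁ T₂ S₁ S₂).Finite :=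
  ((Set.finite_Iic T₁).prod (Set.finite_Iic T₂)).subset fun _ hp => ⟨hp.1, hp.2.1⟩

noncomputable instance : (syncGraph T₁ T₂ S₁ S₂).LocallyFinite :=
  fun _ => (matchedPairs_finite.subset fun _ h => (syncGraph_adj.1 h).2.1).fintype

theorem zero_mem_matchedPairs (h₁ : IsClimb N T₁ S₁) (h₂ : IsClimb N T₂ S₂) :
    (0, 0) ∈ matchedPairs T₁ T₂ S₁ S₂ :=
  ⟨Nat.zero_le _, Nat.zero_le _, h₁.zero.trans h₂.zero.symm⟩

theorem support_syncGraph_finite : (syncGraph T₁ T₂ S₁ S₂).support.Finite :=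
  matchedPairs_finite.subset fun _ ⟨_, h⟩ => (syncGraph_adj.1 h).1

theorem neighborFinset_syncGraph (h₁ : UnitSteps T₁ S₁) (h₂ : UnitSteps T₂ S₂) {a b : ℕ}
    (hab : (a, b) ∈ matchedPairs T₁ T₂ S₁ S₂) :
    (syncGraph T₁ T₂ S₁ S₂).neighborFinset (a, b) =
      upNbrs T₁ S₁ a ×ˢ upNbrs T₂ S₂ b ∪ downNbrs T₁ S₁ a ×ˢ downNbrs T₂ S₂ b := by
  obtain ⟨ha, hb, hS⟩ : a ≤ T₁ ∧ b ≤ T₂ ∧ S₁ a = S₂ b := hab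
  ext ⟨x, y⟩
  simp only [SimpleGraph.mem_neighborFinset, syncGraph_adj, matchedPairs, Set.mem_ofPred_eq,
    mem_union, mem_product, upNbrs, downNbrs, timeNbrs, mem_filter, mem_range]
  constructor
  · rintro ⟨-, ⟨hx, hy, hxy⟩, hax, hby⟩
    have := h₁.add_one_eq_or ha hx hax
    have := h₂.add_one_eq_or hb hy hby
    omega
  · rintro (⟨⟨⟨hx, hax⟩, hSx⟩, ⟨hy, hby⟩, hSy⟩ | ⟨⟨⟨hx, hax⟩, hSx⟩, ⟨hy, hby⟩, hSy⟩) <;>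
      exact ⟨⟨ha, hb, hS⟩, ⟨by omega, by omega, by omega⟩, by omega, by omega⟩

theorem degree_syncGraph (h₁ : UnitSteps T₁ S₁) (h₂ : UnitSteps T₂ S₂) {a b : ℕ}
    (hab : (a, b) ∈ matchedPairs T₁ T₂ S₁ S₂) :
    (syncGraph T₁ T₂ S₁ S₂).degree (a, b) =
      #(upNbrs T₁ S₁ a) * #(upNbrs T₂ S₂ b) + #(downNbrs T₁ S₁ a) * #(downNbrs T₂ S₂ b) := by
  rw [← SimpleGraph.card_neighborFinset_eq_degree, neighborFinset_syncGraph h₁ h₂ hab,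
    card_union_of_disjoint (disjoint_product.2 (Or.inl disjoint_upNbrs_downNbrs)),
    card_product, card_product]

theorem eq_zero_or_eq_of_odd_degree_syncGraph (h₁ : IsClimb N T₁ S₁) (h₂ : IsClimb N T₂ S₂)
    {p : ℕ × ℕ} (hp : Odd ((syncGraph T₁ T₂ S₁ S₂).degree p)) : p = (0, 0) ∨ p = (T₁, T₂) := by
  obtain ⟨a, b⟩ := p
  obtain ⟨q, hq⟩ := (SimpleGraph.degree_pos_iff_mem_support _ _).1 hp.pos
  obtain ⟨ha, hb, hS⟩ : a ≤ T₁ ∧ b ≤ T₂ ∧ S₁ a = S₂ b := (syncGraph_adj.1 hq).1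
  by_cases hN : S₁ a = N
  · exact Or.inr (Prod.ext (h₁.eq_last_of_eq ha hN) (h₂.eq_last_of_eq hb (hS ▸ hN)))
  have haT : a < T₁ := ha.lt_of_ne fun h => hN (h ▸ h₁.last)
  have hbT : b < T₂ := hb.lt_of_ne fun h => hN (hS.trans (h ▸ h₂.last))
  rw [degree_syncGraph h₁.steps h₂.steps ⟨ha, hb, hS⟩] at hp
  rcases Nat.eq_zero_or_pos a with rfl | ha₀ <;> rcases Nat.eq_zero_or_pos b with rfl | hb₀
  · exact Or.inl rfl
  · have hb₀' := h₂.card_upNbrs_add_card_downNbrs hb₀ hbT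
    rw [h₁.card_upNbrs_zero (by omega), downNbrs_eq_empty h₁.zero,
      downNbrs_eq_empty (hS ▸ h₁.zero)] at hp
    rw [downNbrs_eq_empty (hS ▸ h₁.zero), card_empty, add_zero] at hb₀'
    simp [hb₀', Nat.odd_iff] at hp
  · have ha₀' := h₁.card_upNbrs_add_card_downNbrs ha₀ haT
    rw [h₂.card_upNbrs_zero (by omega), downNbrs_eq_empty h₂.zero,
      downNbrs_eq_empty (hS.trans h₂.zero)] at hp
    rw [downNbrs_eq_empty (hS.trans h₂.zero), card_empty, add_zero] at ha₀'
    simp [ha₀', Nat.odd_iff] at hp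
  · exact absurd hp (Nat.not_odd_iff_even.2 (Nat.even_mul_add_mul_of_add_eq_two
      (h₁.card_upNbrs_add_card_downNbrs ha₀ haT) (h₂.card_upNbrs_add_card_downNbrs hb₀ hbT)))

theorem syncGraph_reachable (h₁ : IsClimb N T₁ S₁) (h₂ : IsClimb N T₂ S₂) :
    (syncGraph T₁ T₂ S₁ S₂).Reachable (0, 0) (T₁, T₂) := by
  rcases Nat.eq_zero_or_pos N with hN | hN
  · rw [h₁.eq_zero_iff.2 hN, h₂.eq_zero_iff.2 hN]
  have hT₁ : 0 < T₁ := Nat.pos_of_ne_zero (h₁.eq_zero_iff.not.2 hN.ne')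
  have hT₂ : 0 < T₂ := Nat.pos_of_ne_zero (h₂.eq_zero_iff.not.2 hN.ne')
  have hdeg : (syncGraph T₁ T₂ S₁ S₂).degree (0, 0) = 1 := by
    rw [degree_syncGraph h₁.steps h₂.steps (zero_mem_matchedPairs h₁ h₂),
      h₁.card_upNbrs_zero hT₁, h₂.card_upNbrs_zero hT₂, downNbrs_eq_empty h₁.zero]
    simp
  obtain ⟨v, hne, hreach, hodd⟩ :=
    SimpleGraph.exists_ne_reachable_odd_degree support_syncGraph_finite (hdeg ▸ odd_one)
  obtain rfl | rfl := eq_zero_or_eq_of_odd_degree_syncGraph h₁ h₂ hodd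
  · exact absurd rfl hne
  · exact hreach

theorem IsClimb.exists_sync (h₁ : IsClimb N T₁ S₁) (h₂ : IsClimb N T₂ S₂) :
    ∃ T' H f₁ f₂, IsClimb N T' H ∧ IsReparam T' T₁ f₁ S₁ H ∧ IsReparam T' T₂ f₂ S₂ H := by
  obtain ⟨w⟩ := syncGraph_reachable h₁ h₂
  set p := w.bypass
  have hadj (t : ℕ) (h1 : 1 ≤ t) (h2 : t ≤ p.length) :
      (syncGraph T₁ T₂ S₁ S₂).Adj (p.getVert (t - 1)) (p.getVert t) := by
    simpa [Nat.sub_add_cancel h1] using p.adj_getVert_succ (i := t - 1) (by omega)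
  have hmatched (t : ℕ) (ht : t ≤ p.length) : p.getVert t ∈ matchedPairs T₁ T₂ S₁ S₂ := by
    rcases Nat.eq_zero_or_pos t with rfl | ht₀
    · simpa using zero_mem_matchedPairs h₁ h₂
    · exact (syncGraph_adj.1 (hadj t ht₀ ht)).2.1
  have hsteps₁ : UnitSteps p.length fun t => (p.getVert t).1 := fun t h1 h2 => by
    have := (syncGraph_adj.1 (hadj t h1 h2)).2.2.1
    dsimp only
    omega
  have hsteps₂ : UnitSteps p.length fun t => (p.getVert t).2 := fun t h1 h2 => by
    have := (syncGraph_adj.1 (hadj t h1 h2)).2.2.2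
    dsimp only
    omega
  have hlt (t : ℕ) (ht : t < p.length) : S₁ (p.getVert t).1 < N := by
    obtain ⟨ha, hb, hS⟩ := hmatched t ht.le
    refine (h₁.le ha).lt_of_ne fun hN => ht.ne ?_
    exact (w.bypass_isPath.getVert_eq_end_iff ht.le).1
      (Prod.ext (h₁.eq_last_of_eq ha hN) (h₂.eq_last_of_eq hb (hS ▸ hN)))
  exact ⟨p.length, fun t => S₁ (p.getVert t).1, fun t => (p.getVert t).1,
    fun t => (p.getVert t).2,
    ⟨h₁.steps.comp hsteps₁ fun t ht => (hmatched t ht).1, hlt, by simp [h₁.zero],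
      by simp [h₁.last]⟩,
    ⟨fun t ht => (hmatched t ht).1, hsteps₁, fun _ _ => rfl⟩,
    ⟨fun t ht => (hmatched t ht).2.1, hsteps₂, fun t ht => (hmatched t ht).2.2.symm⟩⟩

end SyncGraph

theorem exists_sync_finset {ι : Type*} {N : ℕ} {T : ι → ℕ} {S : ι → ℕ → ℕ} (s : Finset ι)
    (h : ∀ i ∈ s, IsClimb N (T i) (S i)) :
    ∃ T' H, IsClimb N T' H ∧ ∃ f : ι → ℕ → ℕ, ∀ i ∈ s, IsReparam T' (T i) (f i) (S i) H := by
  classical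
  induction s using Finset.induction_on with
  | empty =>
    exact ⟨N, id, ⟨fun t h _ => Or.inl (Nat.sub_add_cancel h).symm, fun _ => id, rfl, rfl⟩,
      fun _ => id, by simp⟩
  | insert a s ha ih =>
    obtain ⟨T', H, hH, f, hf⟩ := ih fun i hi => h i (mem_insert_of_mem hi)
    obtain ⟨T'', K, g₁, g₂, hK, hg₁, hg₂⟩ := (h a (mem_insert_self a s)).exists_sync hH
    refine ⟨T'', K, hK, fun i => if i = a then g₁ else f i ∘ g₂, fun i hi => ?_⟩
    by_cases hia : i = a
    · subst hia
      simpa using hg₁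
    · simpa [hia] using (hf i ((mem_insert.1 hi).resolve_left hia)).comp hg₂

theorem walk_synchronization_general (n N : ℕ) (T : Fin n → ℕ) (S : Fin n → ℕ → ℕ)
    (hstep : ∀ i, ∀ t, 1 ≤ t → t ≤ T i → S i t = S i (t - 1) + 1 ∨ S i (t - 1) = S i t + 1)
    (hlt : ∀ i, ∀ t < T i, S i t < N)
    (h0 : ∀ i, S i 0 = 0) (hT : ∀ i, S i (T i) = N) :
    ∃ (T' : ℕ) (f : Fin n → ℕ → ℕ),
      (∀ i, ∀ t ≤ T', f i t ≤ T i) ∧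
      (∀ i, ∀ t, 1 ≤ t → t ≤ T' →
        f i t = f i (t - 1) + 1 ∨ f i (t - 1) = f i t + 1) ∧
      (∀ t ≤ T', ∀ i j, S i (f i t) = S j (f j t)) ∧
      (∀ i, S i (f i 0) = 0) ∧ (∀ i, S i (f i T') = N) := by
  obtain ⟨T', H, hH, f, hf⟩ :=
    exists_sync_finset (T := T) (S := S) univ fun i _ => ⟨hstep i, hlt i, h0 i, hT i⟩
  have hf (i : Fin n) := hf i (mem_univ i)
  refine ⟨T', f, fun i => (hf i).le, fun i => (hf i).steps, fun t ht i j => ?_, fun i => ?_,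
    fun i => ?_⟩
  · rw [(hf i).eq t ht, (hf j).eq t ht]
  · rw [(hf i).eq 0 (Nat.zero_le _), hH.zero]
  · rw [(hf i).eq T' le_rfl, hH.last]

/-- walk synchronization: given `n` nearest-neighbor walks
`S i : {0,…,T i} → {0,…,N}` starting at `0`, staying strictly below `N` before their final
time, and ending at `N`, there is a common time horizon `T'` and reparametrizations
`f i : {0,…,T'} → {0,…,T i}` moving by `±1` at each step, such that all the reparametrized
walks agree at all times, start at height `0` and end at height `N`. -/
theorem walk_synchronization (n N : ℕ) (hn : 0 < n) (T : Fin n → ℕ) (S : Fin n → ℕ → ℕ)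
    (hbd : ∀ i, ∀ t ≤ T i, S i t ≤ N)
    (hstep : ∀ i, ∀ t, 1 ≤ t → t ≤ T i → S i t = S i (t - 1) + 1 ∨ S i (t - 1) = S i t + 1)
    (hlt : ∀ i, ∀ t < T i, S i t < N)
    (h0 : ∀ i, S i 0 = 0) (hT : ∀ i, S i (T i) = N) :
    ∃ (T' : ℕ) (f : Fin n → ℕ → ℕ),
      (∀ i, ∀ t ≤ T', f i t ≤ T i) ∧
      (∀ i, ∀ t, 1 ≤ t → t ≤ T' →
        f i t = f i (t - 1) + 1 ∨ f i (t - 1) = f i t + 1) ∧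
      (∀ t ≤ T', ∀ i j, S i (f i t) = S j (f j t)) ∧
      (∀ i, S i (f i 0) = 0) ∧ (∀ i, S i (f i T') = N) :=
  walk_synchronization_general n N T S hstep hlt h0 hT
end

section
/- For every n ≥ 3 and every 2 ≤ k ≤ n-1, there exist orthogonal vectors w_1, w_2 ∈ ℤ^n with ‖w_1‖ = ‖w_2‖ such that the linear map A : ℝ^2 → ℝ^n given by A(x,y) = x·w_1 + y·w_2 satisfies: (i) for every subset I ⊆ [n] with #I = k, the map π_I ∘ A restricted to ℤ^2 is injective (with values in ℤ^{#I}); (ii) there exists a constant c = c(w_1, w_2) > 0 such that for every such I and all u, v ∈ ℝ^2, ‖π_I(Au - Av)‖ ≥ c‖u - v‖. -/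
def tpw1 (n i : ℕ) : ℤ :=
  if n % 2 = 1 ∧ i < 3 then (if i = 0 then 1 else 2)
  else if (i - 3 * (n % 2)) % 2 = 0 then ((i - 3*(n%2))/2 + 1 + 2*(n%2) : ℕ) else -1

def tpw2 (n i : ℕ) : ℤ :=
  if n % 2 = 1 ∧ i < 3 then (if i = 0 then 2 else if i = 1 then 1 else -2)
  else if (i - 3 * (n % 2)) % 2 = 0 then 1 else ((i - 3*(n%2))/2 + 1 + 2*(n%2) : ℕ)

lemma tpw_pair_even (n t : ℕ) :
    tpw1 n (3*(n%2) + 2*t) = ((t + 1 + 2*(n%2) : ℕ) : ℤ) ∧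
    tpw2 n (3*(n%2) + 2*t) = 1 := by
  constructor
  · simp only [tpw1]; rw [if_neg (by omega), if_pos (by omega)]; congr 1; omega
  · simp only [tpw2]; rw [if_neg (by omega), if_pos (by omega)]

lemma tpw_pair_odd (n t : ℕ) :
    tpw1 n (3*(n%2) + 2*t + 1) = -1 ∧
    tpw2 n (3*(n%2) + 2*t + 1) = ((t + 1 + 2*(n%2) : ℕ) : ℤ) := by
  constructor
  · simp only [tpw1]; rw [if_neg (by omega), if_neg (by omega)]
  · simp only [tpw2]; rw [if_neg (by omega), if_neg (by omega)]; congr 1; omega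

lemma tpw_eval_pair (n i : ℕ) (h : 3*(n%2) ≤ i) :
    (∃ t : ℕ, i - 3*(n%2) = 2*t ∧
      tpw1 n i = ((t + 1 + 2*(n%2) : ℕ) : ℤ) ∧ tpw2 n i = 1) ∨
    (∃ t : ℕ, i - 3*(n%2) = 2*t + 1 ∧
      tpw1 n i = -1 ∧ tpw2 n i = ((t + 1 + 2*(n%2) : ℕ) : ℤ)) := by
  rcases Nat.even_or_odd (i - 3*(n%2)) with ⟨t, ht⟩ | ⟨t, ht⟩
  · left
    refine ⟨t, by omega, ?_⟩
    rw [show i = 3*(n%2) + 2*t by omega]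
    exact tpw_pair_even n t
  · right
    refine ⟨t, by omega, ?_⟩
    rw [show i = 3*(n%2) + 2*t + 1 by omega]
    exact tpw_pair_odd n t

lemma tpw_minor (n i j : ℕ) (hij : i < j) (hjn : j < n) :
    tpw1 n i * tpw2 n j - tpw1 n j * tpw2 n i ≠ 0 := by
  by_cases hi3 : n % 2 = 1 ∧ i < 3
  · by_cases hj3 : j < 3
    · obtain ⟨hb1, hi⟩ := hi3
      have e0 : tpw1 n 0 = 1 ∧ tpw2 n 0 = 2 := by
        constructor <;> simp [tpw1, tpw2, hb1]
      have e1 : tpw1 n 1 = 2 ∧ tpw2 n 1 = 1 := by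
        constructor <;> simp [tpw1, tpw2, hb1]
      have e2 : tpw1 n 2 = 2 ∧ tpw2 n 2 = -2 := by
        constructor <;> simp [tpw1, tpw2, hb1]
      interval_cases i <;> interval_cases j <;> simp_all
    · obtain ⟨hb1, hi⟩ := hi3
      rcases tpw_eval_pair n j (by omega) with ⟨t, htj, h1, h2⟩ | ⟨t, htj, h1, h2⟩ <;>
      · rw [h1, h2]
        have hc : (3:ℤ) ≤ ((t + 1 + 2*(n%2) : ℕ) : ℤ) := by
          have : 3 ≤ t + 1 + 2*(n%2) := by omega
          exact_mod_cast this
        set J : ℤ := ((t + 1 + 2*(n%2) : ℕ) : ℤ) with hJ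
        interval_cases i <;>
        · first
          | (have e : tpw1 n 0 = 1 ∧ tpw2 n 0 = 2 := by constructor <;> simp [tpw1, tpw2, hb1]
             rw [e.1, e.2]; nlinarith)
          | (have e : tpw1 n 1 = 2 ∧ tpw2 n 1 = 1 := by constructor <;> simp [tpw1, tpw2, hb1]
             rw [e.1, e.2]; nlinarith)
          | (have e : tpw1 n 2 = 2 ∧ tpw2 n 2 = -2 := by constructor <;> simp [tpw1, tpw2, hb1]
             rw [e.1, e.2]; nlinarith)
  · have hi' : 3*(n%2) ≤ i := by omega
    have hj' : 3*(n%2) ≤ j := by omega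
    rcases tpw_eval_pair n i hi' with ⟨t, hti, h1, h2⟩ | ⟨t, hti, h1, h2⟩ <;>
      rcases tpw_eval_pair n j hj' with ⟨s, htj, g1, g2⟩ | ⟨s, htj, g1, g2⟩ <;>
      rw [h1, h2, g1, g2]
    · have hc : ((t + 1 + 2*(n%2) : ℕ) : ℤ) < ((s + 1 + 2*(n%2) : ℕ) : ℤ) := by
        exact_mod_cast (by omega : t + 1 + 2*(n%2) < s + 1 + 2*(n%2))
      omega
    · have c1 : (1:ℤ) ≤ ((t + 1 + 2*(n%2) : ℕ) : ℤ) := by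
        exact_mod_cast (by omega : 1 ≤ t + 1 + 2*(n%2))
      have c2 : (1:ℤ) ≤ ((s + 1 + 2*(n%2) : ℕ) : ℤ) := by
        exact_mod_cast (by omega : 1 ≤ s + 1 + 2*(n%2))
      nlinarith
    · have c1 : (1:ℤ) ≤ ((t + 1 + 2*(n%2) : ℕ) : ℤ) := by
        exact_mod_cast (by omega : 1 ≤ t + 1 + 2*(n%2))
      have c2 : (1:ℤ) ≤ ((s + 1 + 2*(n%2) : ℕ) : ℤ) := by
        exact_mod_cast (by omega : 1 ≤ s + 1 + 2*(n%2))
      nlinarith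
    · have hc : ((t + 1 + 2*(n%2) : ℕ) : ℤ) < ((s + 1 + 2*(n%2) : ℕ) : ℤ) := by
        exact_mod_cast (by omega : t + 1 + 2*(n%2) < s + 1 + 2*(n%2))
      omega

lemma pair_sum_zero (F : ℕ → ℤ) (m : ℕ) (h : ∀ t, F (2*t) + F (2*t+1) = 0) :
    ∑ p ∈ Finset.range (2*m), F p = 0 := by
  induction m with
  | zero => simp
  | succ m ih =>
    have h2 : 2*(m+1) = (2*m) + 1 + 1 := by ring
    rw [h2, Finset.sum_range_succ, Finset.sum_range_succ, ih]
    have := h m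
    omega

lemma split_sum (n : ℕ) (hn : 3 ≤ n) (F : ℕ → ℤ) :
    ∑ i ∈ Finset.range n, F i
      = ∑ i ∈ Finset.range (3*(n%2)), F i
        + ∑ p ∈ Finset.range (2*((n - 3*(n%2))/2)), F (3*(n%2) + p) := by
  have h : n = 3*(n%2) + 2*((n - 3*(n%2))/2) := by omega
  rw [← Finset.sum_range_add]
  exact Finset.sum_congr (by rw [← h]) (fun _ _ => rfl)

lemma tpw_combined_sum (n : ℕ) (hn : 3 ≤ n) (F : ℤ → ℤ → ℤ)
    (hpair : ∀ j : ℤ, F j 1 + F (-1) j = 0)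
    (htriple : F 1 2 + F 2 1 + F 2 (-2) = 0) :
    ∑ i ∈ Finset.range n, F (tpw1 n i) (tpw2 n i) = 0 := by
  rw [split_sum n hn]
  have hp : ∑ p ∈ Finset.range (2*((n - 3*(n%2))/2)),
      F (tpw1 n (3*(n%2) + p)) (tpw2 n (3*(n%2) + p)) = 0 := by
    apply pair_sum_zero
    intro t
    have he := tpw_pair_even n t
    have ho := tpw_pair_odd n t
    rw [show 3*(n%2) + (2*t+1) = 3*(n%2) + 2*t + 1 by ring] 
    rw [he.1, he.2, ho.1, ho.2]
    exact hpair _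
  rw [hp]
  rcases Nat.mod_two_eq_zero_or_one n with h | h
  · simp [h]
  · have e0 : tpw1 n 0 = 1 ∧ tpw2 n 0 = 2 := by constructor <;> simp [tpw1, tpw2, h]
    have e1 : tpw1 n 1 = 2 ∧ tpw2 n 1 = 1 := by constructor <;> simp [tpw1, tpw2, h]
    have e2 : tpw1 n 2 = 2 ∧ tpw2 n 2 = -2 := by constructor <;> simp [tpw1, tpw2, h]
    rw [h]
    norm_num [Finset.sum_range_succ, e0.1, e0.2, e1.1, e1.2, e2.1, e2.2]
    linarith [htriple]

set_option maxHeartbeats 800000 in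
lemma det_ge_one {ι : Type*} [DecidableEq ι] (I : Finset ι) (f g : ι → ℤ)
    (i j : ι) (hi : i ∈ I) (hj : j ∈ I) (hij : i ≠ j)
    (hm : f i * g j - f j * g i ≠ 0) :
    1 ≤ (∑ x ∈ I, f x ^ 2) * (∑ x ∈ I, g x ^ 2) - (∑ x ∈ I, f x * g x) ^ 2 := by
  classical
  have hj' : j ∈ I.erase i := Finset.mem_erase.2 ⟨hij.symm, hj⟩
  set J := (I.erase i).erase j with hJ
  have hsplit : ∀ F : ι → ℤ, ∑ x ∈ I, F x = F i + (F j + ∑ x ∈ J, F x) := by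
    intro F
    rw [hJ, Finset.add_sum_erase _ F hj', Finset.add_sum_erase _ F hi]
  set a := f i ^ 2 + f j ^ 2 with ha
  set c := g i ^ 2 + g j ^ 2 with hc
  set b := f i * g i + f j * g j with hb
  set m := f i * g j - f j * g i with hmm
  set A' := ∑ x ∈ J, f x ^ 2 with hA
  set C' := ∑ x ∈ J, g x ^ 2 with hC
  set B' := ∑ x ∈ J, f x * g x with hB
  rw [hsplit (fun x => f x ^ 2), hsplit (fun x => g x ^ 2), hsplit (fun x => f x * g x)]
  have hCS : B' ^ 2 ≤ A' * C' := Finset.sum_mul_sq_le_sq_mul_sq J f g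
  have hA0 : 0 ≤ A' := Finset.sum_nonneg fun x _ => sq_nonneg _
  have hC0 : 0 ≤ C' := Finset.sum_nonneg fun x _ => sq_nonneg _
  have ha0 : 0 ≤ a := by positivity
  have hc0 : 0 ≤ c := by positivity
  have hlag : a * c - b ^ 2 = m ^ 2 := by rw [ha, hb, hc, hmm]; ring
  have hm2 : 1 ≤ m ^ 2 := by
    rcases hm.lt_or_gt with h | h <;> nlinarith
  have hac : b ^ 2 ≤ a * c := by nlinarith
  have hp1 : b ^ 2 * B' ^ 2 ≤ (a * c) * (A' * C') :=
    mul_le_mul hac hCS (sq_nonneg _) (by positivity)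
  have h1 : (2 * b * B') ^ 2 ≤ (a * C' + c * A') ^ 2 := by
    nlinarith [sq_nonneg (a * C' - c * A')]
  have hy : 0 ≤ a * C' + c * A' := by positivity
  have h2 : 2 * b * B' ≤ a * C' + c * A' := le_of_sq_le_sq h1 hy
  have e1 : f i ^ 2 + (f j ^ 2 + A') = a + A' := by rw [ha]; ring
  have e2 : g i ^ 2 + (g j ^ 2 + C') = c + C' := by rw [hc]; ring
  have e3 : f i * g i + (f j * g j + B') = b + B' := by rw [hb]; ring
  rw [e1, e2, e3]
  have expand : (a + A') * (c + C') - (b + B') ^ 2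
      = (a * c - b ^ 2) + (a * C' + c * A' - 2 * b * B') + (A' * C' - B' ^ 2) := by ring
  rw [expand]
  linarith [hlag, hm2, h2, hCS]

lemma tpw_exists_minor (n : ℕ) (I : Finset (Fin n)) (h2 : 2 ≤ I.card) :
    ∃ i ∈ I, ∃ j ∈ I, i ≠ j ∧
      tpw1 n i * tpw2 n j - tpw1 n j * tpw2 n i ≠ 0 := by
  obtain ⟨i, hi, j, hj, hij⟩ := Finset.one_lt_card.mp (show 1 < I.card by omega)
  rcases lt_or_gt_of_ne (fun h : (i:ℕ) = (j:ℕ) => hij (Fin.ext h)) with h | h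
  · exact ⟨i, hi, j, hj, hij, tpw_minor n i j h j.isLt⟩
  · refine ⟨i, hi, j, hj, hij, fun hz => tpw_minor n j i h i.isLt ?_⟩
    linarith

/-- for `n ≥ 3` and `2 ≤ k ≤ n-1` there are orthogonal vectors
`w₁, w₂ ∈ ℤⁿ` of equal (Euclidean) norm such that for the linear map
`A(x,y) = x·w₁ + y·w₂` every coordinate projection `π_I ∘ A` onto a `k`-subset `I` of the
coordinates is injective on `ℤ²`, and moreover `‖π_I(Au - Av)‖ ≥ c‖u - v‖` for a uniform
constant `c > 0` and all `u, v ∈ ℝ²`. -/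
theorem tilted_plane_exists (n k : ℕ) (hn : 3 ≤ n) (hk2 : 2 ≤ k) (hkn : k ≤ n - 1) :
    ∃ w₁ w₂ : Fin n → ℤ,
      (∑ i, w₁ i * w₂ i) = 0 ∧
      (∑ i, (w₁ i) ^ 2) = (∑ i, (w₂ i) ^ 2) ∧
      (∀ I : Finset (Fin n), I.card = k →
        Function.Injective (fun z : ℤ × ℤ => fun i : I => z.1 * w₁ i + z.2 * w₂ i)) ∧
      ∃ c : ℝ, 0 < c ∧ ∀ I : Finset (Fin n), I.card = k → ∀ u v : ℝ × ℝ,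
        c * Real.sqrt ((u.1 - v.1) ^ 2 + (u.2 - v.2) ^ 2) ≤
          Real.sqrt (∑ i ∈ I,
            ((u.1 - v.1) * (w₁ i : ℝ) + (u.2 - v.2) * (w₂ i : ℝ)) ^ 2) := by
  refine ⟨fun i => tpw1 n i, fun i => tpw2 n i, ?_, ?_, ?_, ?_⟩
  · -- orthogonality
    rw [Fin.sum_univ_eq_sum_range (fun i => tpw1 n i * tpw2 n i) n]
    exact tpw_combined_sum n hn (fun x y => x * y) (fun j => by ring) (by norm_num)
  · -- equal norms
    have h := tpw_combined_sum n hn (fun x y => x^2 - y^2) (fun j => by ring) (by norm_num)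
    rw [Finset.sum_sub_distrib] at h
    rw [Fin.sum_univ_eq_sum_range (fun i => tpw1 n i ^ 2) n,
        Fin.sum_univ_eq_sum_range (fun i => tpw2 n i ^ 2) n]
    omega
  · -- injectivity
    intro I hI
    obtain ⟨i, hi, j, hj, hij, hD⟩ := tpw_exists_minor n I (by omega)
    intro z y h
    have ei := congrFun h ⟨i, hi⟩
    have ej := congrFun h ⟨j, hj⟩
    simp only at ei ej
    set a := z.1 - y.1 with haa
    set b := z.2 - y.2 with hbb
    have e1 : a * tpw1 n i + b * tpw2 n i = 0 := by rw [haa, hbb]; linear_combination ei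
    have e2 : a * tpw1 n j + b * tpw2 n j = 0 := by rw [haa, hbb]; linear_combination ej
    have hA : a * (tpw1 n i * tpw2 n j - tpw1 n j * tpw2 n i) = 0 := by
      linear_combination tpw2 n j * e1 - tpw2 n i * e2
    have hB : b * (tpw1 n i * tpw2 n j - tpw1 n j * tpw2 n i) = 0 := by
      linear_combination tpw1 n i * e2 - tpw1 n j * e1
    have ha0 : a = 0 := by
      rcases mul_eq_zero.mp hA with h' | h'
      · exact h'
      · exact absurd h' hD
    have hb0 : b = 0 := by
      rcases mul_eq_zero.mp hB with h' | h'
      · exact h'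
      · exact absurd h' hD
    exact Prod.ext_iff.mpr ⟨by omega, by omega⟩
  · -- metric lower bound
    set N : ℤ := ∑ i : Fin n, (tpw1 n i ^ 2 + tpw2 n i ^ 2) with hN
    have hterm0 : (1:ℤ) ≤ tpw1 n 0 ^ 2 + tpw2 n 0 ^ 2 := by
      rcases Nat.mod_two_eq_zero_or_one n with h | h <;>
        · have e1 : tpw1 n 0 = 1 := by simp [tpw1, h]
          nlinarith [sq_nonneg (tpw2 n 0)]
    have hN1 : (1:ℤ) ≤ N := by
      rw [hN]
      calc (1:ℤ) ≤ tpw1 n (⟨0, by omega⟩ : Fin n) ^ 2 + tpw2 n (⟨0, by omega⟩ : Fin n) ^ 2 := hterm0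
        _ ≤ _ := Finset.single_le_sum (f := fun i : Fin n => tpw1 n i ^ 2 + tpw2 n i ^ 2)
            (fun i _ => by positivity) (Finset.mem_univ _)
    have hNR : (1:ℝ) ≤ (N:ℝ) := by exact_mod_cast hN1
    refine ⟨(Real.sqrt (N:ℝ))⁻¹, by positivity, ?_⟩
    intro I hI u v
    set d1 := u.1 - v.1 with hd1
    set d2 := u.2 - v.2 with hd2
    set AI : ℤ := ∑ i ∈ I, tpw1 n i ^ 2 with hAI
    set CI : ℤ := ∑ i ∈ I, tpw2 n i ^ 2 with hCI
    set BI : ℤ := ∑ i ∈ I, tpw1 n i * tpw2 n i with hBI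
    obtain ⟨i, hi, j, hj, hij, hDm⟩ := tpw_exists_minor n I (by omega)
    have hD : (1:ℤ) ≤ AI * CI - BI ^ 2 :=
      det_ge_one I (fun x => tpw1 n x) (fun x => tpw2 n x) i j hi hj hij hDm
    have hNAC : AI + CI ≤ N := by
      rw [hN, hAI, hCI, ← Finset.sum_add_distrib]
      exact Finset.sum_le_sum_of_subset_of_nonneg (Finset.subset_univ I)
        (fun i _ _ => by positivity)
    -- real versions
    set Q : ℝ := ∑ i ∈ I, (d1 * (tpw1 n i : ℝ) + d2 * (tpw2 n i : ℝ)) ^ 2 with hQ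
    have hQ0 : 0 ≤ Q := Finset.sum_nonneg fun i _ => sq_nonneg _
    have hQexp : Q = d1^2 * (AI:ℝ) + 2*d1*d2*(BI:ℝ) + d2^2 * (CI:ℝ) := by
      rw [hQ, hAI, hBI, hCI]
      push_cast
      rw [Finset.mul_sum, Finset.mul_sum, Finset.mul_sum, ← Finset.sum_add_distrib,
        ← Finset.sum_add_distrib]
      exact Finset.sum_congr rfl fun i _ => by ring
    have hS0 : 0 ≤ d1^2 + d2^2 := by positivity
    have hDR : (1:ℝ) ≤ (AI:ℝ) * (CI:ℝ) - (BI:ℝ)^2 := by exact_mod_cast hD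
    have hNACR : (AI:ℝ) + (CI:ℝ) ≤ (N:ℝ) := by exact_mod_cast hNAC
    have hkey : (d1^2 + d2^2) ≤ (N:ℝ) * Q := by
      have hid : ((AI:ℝ) + (CI:ℝ)) * Q
          = ((AI:ℝ)*(CI:ℝ) - (BI:ℝ)^2) * (d1^2 + d2^2)
            + (((AI:ℝ)*d1 + (BI:ℝ)*d2)^2 + ((BI:ℝ)*d1 + (CI:ℝ)*d2)^2) := by
        rw [hQexp]; ring
      have t1 : (d1^2 + d2^2) ≤ ((AI:ℝ) + (CI:ℝ)) * Q := by
        nlinarith [sq_nonneg ((AI:ℝ)*d1 + (BI:ℝ)*d2), sq_nonneg ((BI:ℝ)*d1 + (CI:ℝ)*d2),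
          mul_nonneg (by linarith : (0:ℝ) ≤ (AI:ℝ)*(CI:ℝ) - (BI:ℝ)^2 - 1) hS0]
      have t2 : ((AI:ℝ) + (CI:ℝ)) * Q ≤ (N:ℝ) * Q := by
        apply mul_le_mul_of_nonneg_right hNACR hQ0
      linarith
    have hNpos : (0:ℝ) < (N:ℝ) := by linarith
    have lhs_eq : (Real.sqrt (N:ℝ))⁻¹ * Real.sqrt (d1^2 + d2^2)
        = Real.sqrt ((d1^2 + d2^2) / (N:ℝ)) := by
      rw [Real.sqrt_div hS0]
      ring
    rw [lhs_eq]
    apply Real.sqrt_le_sqrt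
    rw [div_le_iff₀ hNpos]
    calc (d1^2+d2^2) ≤ (N:ℝ) * Q := hkey
      _ = Q * (N:ℝ) := by ring
end

section
/- Let v_1 = (-1,-1,...,-1,1,0) and v_2 = (-1,-2,-3,...,-(n-2),0,1) in ℝ^n, n ≥ 3, and let U : ℝ^2 → ℝ^n be U(x,y) = x·v_1 + y·v_2. Then for every I ⊆ [n] with #I = 2, the 2×2 matrix of π_I ∘ U has determinant of absolute value at least 1; in particular π_I ∘ U : ℝ^2 → ℝ^2 is injective. Consequently, π_I ∘ U is injective for every I ⊆ [n] with #I ≥ 2. -/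
lemma cast_sub_abs_ge_one (a b : ℕ) (h : a ≠ b) : 1 ≤ |(a : ℝ) - b| := by
  rcases h.lt_or_gt with h | h
  · have : (a : ℝ) + 1 ≤ b := by exact_mod_cast h
    rw [abs_sub_comm, abs_of_nonneg (by linarith)]; linarith
  · have : (b : ℝ) + 1 ≤ a := by exact_mod_cast h
    rw [abs_of_nonneg (by linarith)]; linarith

lemma cast_add_one_abs_ge_one (a : ℕ) : 1 ≤ |(a : ℝ) + 1| := by
  have : (0:ℝ) ≤ a := Nat.cast_nonneg a
  rw [abs_of_nonneg (by linarith)]; linarith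

lemma neg_neg_case (a : ℕ) : 1 ≤ |(-1 : ℝ) + -(a : ℝ)| := by
  rw [show (-1:ℝ) + -(a:ℝ) = -((a:ℝ)+1) by ring, abs_neg]
  exact cast_add_one_abs_ge_one a

/-- for `v₁ = (-1,…,-1,1,0)` and `v₂ = (-1,-2,…,-(n-2),0,1)` in `ℝⁿ` and
`U(x,y) = x·v₁ + y·v₂`, every `2×2` coordinate projection of `U` has determinant of absolute
value at least `1`; consequently `π_I ∘ U` is injective for every `I ⊆ [n]` with `#I ≥ 2`. -/
theorem proj_U_injective (n : ℕ) (hn : 3 ≤ n) :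
    let v₁ : Fin n → ℝ := fun i =>
      if (i : ℕ) = n - 1 then 0 else if (i : ℕ) = n - 2 then 1 else -1
    let v₂ : Fin n → ℝ := fun i =>
      if (i : ℕ) = n - 1 then 1 else if (i : ℕ) = n - 2 then 0 else -((i : ℕ) + 1)
    (∀ i j : Fin n, i ≠ j → 1 ≤ |v₁ i * v₂ j - v₁ j * v₂ i|) ∧
      ∀ I : Finset (Fin n), 2 ≤ I.card →
        Function.Injective (fun z : ℝ × ℝ => fun i : I => z.1 * v₁ i + z.2 * v₂ i) := by
  intro v₁ v₂
  have key : ∀ i j : Fin n, i ≠ j → 1 ≤ |v₁ i * v₂ j - v₁ j * v₂ i| := by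
    intro i j hij
    have hij' : (i : ℕ) ≠ (j : ℕ) := fun h => hij (Fin.ext h)
    have hne : ¬ (n - 2 = n - 1) := by omega
    simp only [v₁, v₂]
    by_cases hi1 : (i : ℕ) = n - 1 <;> by_cases hi2 : (i : ℕ) = n - 2 <;>
      by_cases hj1 : (j : ℕ) = n - 1 <;> by_cases hj2 : (j : ℕ) = n - 2 <;>
      simp only [hi1, hi2, hj1, hj2, hne, if_pos, if_neg, if_true, if_false, ite_true, ite_false]
    all_goals try (exfalso; omega)
    all_goals try norm_num
    all_goals
      first
        | exact neg_neg_case (j : ℕ)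
        | exact cast_add_one_abs_ge_one (i : ℕ)
        | exact cast_sub_abs_ge_one (j : ℕ) (i : ℕ) (Ne.symm hij')
  refine ⟨key, ?_⟩
  intro I hI z w hzw
  obtain ⟨i, hi, j, hj, hijne⟩ := Finset.one_lt_card.mp hI
  have h1 : z.1 * v₁ i + z.2 * v₂ i = w.1 * v₁ i + w.2 * v₂ i := congrFun hzw ⟨i, hi⟩
  have h2 : z.1 * v₁ j + z.2 * v₂ j = w.1 * v₁ j + w.2 * v₂ j := congrFun hzw ⟨j, hj⟩
  have hd := key i j hijne
  have hdet : v₁ i * v₂ j - v₁ j * v₂ i ≠ 0 := by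
    intro h; rw [h] at hd; simp at hd; linarith
  have ea : (z.1 - w.1) * (v₁ i * v₂ j - v₁ j * v₂ i) = 0 := by
    linear_combination v₂ j * h1 - v₂ i * h2
  have eb : (z.2 - w.2) * (v₁ i * v₂ j - v₁ j * v₂ i) = 0 := by
    linear_combination v₁ i * h2 - v₁ j * h1
  have ha : z.1 = w.1 := by
    rcases mul_eq_zero.mp ea with h | h
    · linarith [sub_eq_zero.mp h]
    · exact absurd h hdet
  have hb : z.2 = w.2 := by
    rcases mul_eq_zero.mp eb with h | h
    · linarith [sub_eq_zero.mp h]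
    · exact absurd h hdet
  exact Prod.ext ha hb
end

section
/- Fix n ≥ 3, 2 ≤ k ≤ n-1 and I ∈ 𝓘(k;n). Work with the Bernoulli (n,k)-hyperplane percolation configuration ω(v) = ∏_{J ∈ 𝓘(k;n)} ω_J(π_J(v)). Suppose: (i) the ω_I-open cluster 𝒱_{ω_I}(o; ℤ^k_I) of the origin in ℤ^k_I is finite; and (ii) there exists T ⊆ ℤ^{n-k}_{[n]∖I} that surrounds the origin in ℤ^{n-k}_{[n]∖I} such that every v ∈ T is 𝒫_I(x)-closed for every x ∈ 𝒱_{ω_I}(o; ℤ^k_I). Then the ω-open cluster of the origin in ℤ^n is finite. -/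
namespace BernoulliHyperplane

variable {n : ℕ}

/-- Nearest-neighbor adjacency in `ℤⁿ` (`l¹`-distance one). -/
def latAdj (v w : Fin n → ℤ) : Prop := (∑ i, |v i - w i|) = 1

/-- Coordinate projection onto the sublattice spanned by the coordinates in `J`. -/
def proj (J : Finset (Fin n)) (v : Fin n → ℤ) : Fin n → ℤ := fun i => if i ∈ J then v i else 0

/-- The sublattice `ℤ^J` of points supported on the coordinates in `J`. -/
def sub (J : Finset (Fin n)) : Set (Fin n → ℤ) := {v | ∀ i ∉ J, v i = 0}

/-- The open cluster of `x` inside the set of sites `S`, for the openness predicate `good`: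
all sites reachable from `x` by nearest-neighbor paths of `good` sites staying in `S`. -/
def clusterIn (S : Set (Fin n → ℤ)) (good : (Fin n → ℤ) → Prop) (x : Fin n → ℤ) :
    Set (Fin n → ℤ) :=
  {v | (x ∈ S ∧ good x) ∧ Relation.ReflTransGen (fun u w => latAdj u w ∧ w ∈ S ∧ good w) x v}

/-- A site of `ℤⁿ` is open in `(n,k)`-hyperplane percolation iff all its projections onto the
`k`-dimensional coordinate sublattices are open. -/
def hpOpen (k : ℕ) (f : Finset (Fin n) → (Fin n → ℤ) → Bool) (v : Fin n → ℤ) : Prop :=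
  ∀ J : Finset (Fin n), J.card = k → f J (proj J v) = true

/-- `T` surrounds the origin in the lattice `S`, witnessed by the decomposition
`S ∖ T = A ∪ B`: `A` is finite, connected, contains the origin, and is at `l¹`-distance
at least `2` from `B`. -/
def SurroundsWith (S T A B : Set (Fin n → ℤ)) : Prop :=
  T ⊆ S ∧ A ∪ B = S \ T ∧ Disjoint A B ∧ (0 : Fin n → ℤ) ∈ A ∧ A.Finite ∧
    (∀ a ∈ A, Relation.ReflTransGen (fun u w : Fin n → ℤ => latAdj u w ∧ u ∈ A ∧ w ∈ A) 0 a) ∧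
    ∀ a ∈ A, ∀ b ∈ B, 2 ≤ ∑ i, |a i - b i|

/-- `T` surrounds the origin in the lattice `S`. -/
def Surrounds (S T : Set (Fin n → ℤ)) : Prop := ∃ A B, SurroundsWith S T A B

/-- For `x ∈ ℤᵏ_I` and `v ∈ ℤ^{n-k}_{[n]∖I}`, the site `v` is `𝒫_I(x)`-closed: the unique
point `u = x + v` of `𝒫_I(x)` projecting to `v` satisfies `ω_J(π_J(u)) = 0` for some
`k`-subset `J ≠ I`. -/
def PClosed (k : ℕ) (f : Finset (Fin n) → (Fin n → ℤ) → Bool) (I : Finset (Fin n))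
    (x v : Fin n → ℤ) : Prop :=
  ∃ J : Finset (Fin n), J.card = k ∧ J ≠ I ∧ f J (proj J (x + v)) = false

lemma proj_proj (J : Finset (Fin n)) (v : Fin n → ℤ) : proj J (proj J v) = proj J v := by
  funext i; simp only [proj]; split <;> simp [*]

lemma proj_mem_sub (J : Finset (Fin n)) (v : Fin n → ℤ) : proj J v ∈ sub J :=
  fun i hi => if_neg hi

lemma proj_zero (J : Finset (Fin n)) : proj J (0 : Fin n → ℤ) = 0 := by
  funext i; simp [proj]

lemma proj_add_proj_compl (I : Finset (Fin n)) (v : Fin n → ℤ) :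
    proj I v + proj Iᶜ v = v := by
  funext i
  by_cases hi : i ∈ I <;> simp [proj, hi]

lemma sum_abs_proj (J : Finset (Fin n)) (u w : Fin n → ℤ) :
    ∑ i, |proj J u i - proj J w i| = ∑ i ∈ J, |u i - w i| := by
  rw [← Finset.sum_subset (Finset.subset_univ J) (fun i _ hi => by simp [proj, hi])]
  exact Finset.sum_congr rfl (fun i hi => by simp [proj, hi])

lemma latAdj_split (I : Finset (Fin n)) {u w : Fin n → ℤ} (h : latAdj u w) :
    (latAdj (proj I u) (proj I w) ∧ proj Iᶜ u = proj Iᶜ w) ∨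
    (proj I u = proj I w ∧ latAdj (proj Iᶜ u) (proj Iᶜ w)) := by
  unfold latAdj at *
  rw [sum_abs_proj, sum_abs_proj]
  have hsplit := Finset.sum_add_sum_compl I (fun i => |u i - w i|)
  have h1 : 0 ≤ ∑ i ∈ I, |u i - w i| := Finset.sum_nonneg fun i _ => abs_nonneg _
  have h2 : 0 ≤ ∑ i ∈ Iᶜ, |u i - w i| := Finset.sum_nonneg fun i _ => abs_nonneg _
  have key : ∀ J : Finset (Fin n), (∑ i ∈ J, |u i - w i|) = 0 → proj J u = proj J w := by
    intro J hJ
    funext i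
    by_cases hi : i ∈ J
    · have h0 : |u i - w i| = 0 :=
        (Finset.sum_eq_zero_iff_of_nonneg (fun i _ => abs_nonneg _)).1 hJ i hi
      have := abs_eq_zero.mp h0
      simp only [proj, if_pos hi]
      omega
    · simp [proj, hi]
  have hcases : ((∑ i ∈ I, |u i - w i|) = 1 ∧ (∑ i ∈ Iᶜ, |u i - w i|) = 0) ∨
      ((∑ i ∈ I, |u i - w i|) = 0 ∧ (∑ i ∈ Iᶜ, |u i - w i|) = 1) := by omega
  rcases hcases with ⟨ha, hb⟩ | ⟨ha, hb⟩
  · exact Or.inl ⟨ha, key Iᶜ hb⟩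
  · exact Or.inr ⟨key I ha, hb⟩

/-- deterministic blocking lemma: if the `ω_I`-cluster of the origin in `ℤᵏ_I`
is finite and some `T ⊆ ℤ^{n-k}_{[n]∖I}` surrounding the origin consists of sites that are
`𝒫_I(x)`-closed for every `x` in that cluster, then the `ω`-open cluster of the origin in
`ℤⁿ` is finite. -/
theorem blocking_lemma (n k : ℕ) (hn : 3 ≤ n) (hk2 : 2 ≤ k) (hkn : k ≤ n - 1)
    (f : Finset (Fin n) → (Fin n → ℤ) → Bool) (I : Finset (Fin n)) (hI : I.card = k)
    (hfin : (clusterIn (sub I) (fun v => f I (proj I v) = true) 0).Finite)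
    (T : Set (Fin n → ℤ)) (hsurr : Surrounds (sub Iᶜ) T)
    (hclosed : ∀ v ∈ T, ∀ x ∈ clusterIn (sub I) (fun v => f I (proj I v) = true) 0,
      PClosed k f I x v) :
    (clusterIn Set.univ (hpOpen k f) 0).Finite := by
  obtain ⟨A, B, hTsub, hAB, hdisj, h0A, hAfin, hAconn, hdist⟩ := hsurr
  set C := clusterIn (sub I) (fun v => f I (proj I v) = true) 0 with hC
  -- key claim: every site of the ω-cluster projects into C and A
  have claim : ∀ w ∈ clusterIn Set.univ (hpOpen k f) 0, proj I w ∈ C ∧ proj Iᶜ w ∈ A := by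
    rintro w ⟨⟨-, h0open⟩, hpath⟩
    have hbase : (0 : Fin n → ℤ) ∈ sub I ∧ f I (proj I (0 : Fin n → ℤ)) = true :=
      ⟨fun i _ => rfl, h0open I hI⟩
    induction hpath with
    | refl =>
      refine ⟨⟨hbase, ?_⟩, ?_⟩
      · rw [proj_zero]
      · rw [proj_zero]; exact h0A
    | @tail b c hab step ih =>
      obtain ⟨hadj, -, hopen'⟩ := step
      obtain ⟨hICw, hIcw⟩ := ih
      rcases latAdj_split I hadj with ⟨hadjI, heq⟩ | ⟨heq, hadjc⟩
      · -- step in the I-directions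
        refine ⟨⟨hICw.1, hICw.2.tail ⟨hadjI, proj_mem_sub I _, ?_⟩⟩, heq ▸ hIcw⟩
        simp only [proj_proj]
        exact hopen' I hI
      · -- step in the Iᶜ-directions
        refine ⟨heq ▸ hICw, ?_⟩
        by_cases hT : proj Iᶜ c ∈ T
        · -- contradiction: the site is PClosed but ω-open
          exfalso
          obtain ⟨J, hJk, hJI, hJf⟩ := hclosed _ hT (proj I c) (heq ▸ hICw)
          rw [proj_add_proj_compl] at hJf
          have := hopen' J hJk
          rw [this] at hJf
          simp at hJf
        · have hmem : proj Iᶜ c ∈ A ∪ B := by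
            rw [hAB]
            exact ⟨proj_mem_sub Iᶜ _, hT⟩
          rcases hmem with hA | hB
          · exact hA
          · exfalso
            have h2 := hdist (proj Iᶜ b) hIcw (proj Iᶜ c) hB
            rw [hadjc] at h2
            omega
  -- conclude finiteness
  have hsubset : clusterIn Set.univ (hpOpen k f) 0 ⊆
      (fun p : (Fin n → ℤ) × (Fin n → ℤ) => p.1 + p.2) '' (C ×ˢ A) := by
    intro w hw
    obtain ⟨h1, h2⟩ := claim w hw
    exact ⟨(proj I w, proj Iᶜ w), ⟨h1, h2⟩, proj_add_proj_compl I w⟩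
  exact Set.Finite.subset ((hfin.prod hAfin).image _) hsubset

end BernoulliHyperplane
end

section
/- Suppose k divides n, write n = lk with l ≥ 2, and let I_1,...,I_l ∈ 𝓘(k;n) be a partition of [n] into k-element blocks. If p_{I_j} < p_c(ℤ^k) for every 1 ≤ j ≤ l (the remaining parameters p_J for J ∉ {I_1,...,I_l} being arbitrary, possibly equal to 1), then in Bernoulli (n,k)-hyperplane percolation the open cluster of the origin in ℤ^n is finite almost surely. -/
/-!
The map `u ↦ (u|_{I_j})_j` is injective on `ℤⁿ`, so if the open cluster of the origin is
infinite, its image in some block `ℤᵏ_{I_j}` is infinite. A nearest-neighbour step in `ℤⁿ`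
either fixes the `I_j`-coordinates or is a nearest-neighbour step of `ℤᵏ`, and every open site
has an `ω_{I_j}`-open projection, so this image lies in the open cluster of the origin of the
Bernoulli field `ω_{I_j}` on `ℤᵏ`, which is finite almost surely since `p_{I_j} < p_c(ℤᵏ)`.

The definition of `p_c` only speaks of the parameters above which the cluster is finite, so the
last step needs monotonicity in `p`: for `p < q` the field `ω ∨ ξ`, with `ξ` an independent
Bernoulli(`r`) field and `p + (1 - p) r = q`, is a Bernoulli(`q`) field dominating `ω`.
-/

open MeasureTheory ProbabilityTheory

namespace BernoulliHyperplane

variable {n : ℕ}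

/-- `(f v)_{v ∈ ℤᵈ}` is an i.i.d. Bernoulli(`p`) random field on `ℤᵈ` under `μ`. -/
def IsBernoulliField (d : ℕ) (p : ℝ) {Ω : Type} [MeasurableSpace Ω] (μ : Measure Ω)
    (f : (Fin d → ℤ) → Ω → Bool) : Prop :=
  IsProbabilityMeasure μ ∧ (∀ v, Measurable (f v)) ∧
    iIndepFun f μ ∧
    ∀ v, μ {a | f v a = true} = ENNReal.ofReal p

/-- The critical probability of Bernoulli site percolation on `ℤᵈ`: the supremum of the
parameters `p ∈ [0,1]` for which every i.i.d. Bernoulli(`p`) field on `ℤᵈ` has no infinite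
open cluster at the origin almost surely. -/
noncomputable def pcSite (d : ℕ) : ℝ :=
  sSup {p : ℝ | p ∈ Set.Icc (0:ℝ) 1 ∧
    ∀ (Ω : Type) (_ : MeasurableSpace Ω) (μ : Measure Ω) (f : (Fin d → ℤ) → Ω → Bool),
      IsBernoulliField d p μ f →
      μ {a | (clusterIn Set.univ (fun v => f v a = true) 0).Infinite} = 0}

/-- The random fields `(F J v)` (for `J` a `k`-subset of `[n]` and `v` in the sublattice `ℤᵏ_J`)
form independent i.i.d. Bernoulli(`p J`) fields: this is Bernoulli `(n,k)`-hyperplane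
percolation with parameter vector `p`. -/
def IsHyperplanePercolation (n k : ℕ) (p : Finset (Fin n) → ℝ) {Ω : Type} [MeasurableSpace Ω]
    (μ : Measure Ω) (F : Finset (Fin n) → (Fin n → ℤ) → Ω → Bool) : Prop :=
  IsProbabilityMeasure μ ∧ (∀ J v, Measurable (F J v)) ∧
    iIndepFun
      (fun (q : {q : Finset (Fin n) × (Fin n → ℤ) // q.1.card = k ∧ ∀ i ∉ q.1, q.2 i = 0}) a =>
        F q.1.1 q.1.2 a) μ ∧
    ∀ J : Finset (Fin n), J.card = k → ∀ v : Fin n → ℤ, (∀ i ∉ J, v i = 0) →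
      μ {a | F J v a = true} = ENNReal.ofReal (p J)

end BernoulliHyperplane

open Measure

section InfinitePiProd

variable {ι α β : Type*} [MeasurableSpace α] [MeasurableSpace β]

theorem MeasureTheory.Measure.infinitePi_prod_infinitePi_map_zip
    (μ : ι → Measure α) (ν : ι → Measure β)
    [∀ i, IsProbabilityMeasure (μ i)] [∀ i, IsProbabilityMeasure (ν i)] :
    ((infinitePi μ).prod (infinitePi ν)).map (fun x i ↦ (x.1 i, x.2 i)) =
      infinitePi fun i ↦ (μ i).prod (ν i) := by
  refine IsProjectiveLimit.unique (fun s ↦ ?_) (isProjectiveLimit_infinitePi _)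
  have hzip : s.restrict ∘ (fun x : (ι → α) × (ι → β) ↦ fun i ↦ (x.1 i, x.2 i)) =
      (MeasurableEquiv.arrowProdEquivProdArrow α β s).symm ∘ Prod.map s.restrict s.restrict :=
    rfl
  rw [map_map (by fun_prop) (by fun_prop), hzip, ← map_map (by fun_prop) (by fun_prop),
    ← map_prod_map _ _ (by fun_prop) (by fun_prop), infinitePi_map_restrict,
    infinitePi_map_restrict]
  exact (measurePreserving_arrowProdEquivProdArrow α β s _ _).symm.map_eq

theorem ProbabilityTheory.iIndepFun.prodMk_prod {Ω Ω' : Type*} [MeasurableSpace Ω]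
    [MeasurableSpace Ω'] {μ : Measure Ω} {ν : Measure Ω'} {X : ι → Ω → α} {Y : ι → Ω' → β}
    (hXm : ∀ i, Measurable (X i)) (hYm : ∀ i, Measurable (Y i))
    (hX : iIndepFun X μ) (hY : iIndepFun Y ν) :
    iIndepFun (fun i ω ↦ (X i ω.1, Y i ω.2)) (μ.prod ν) := by
  have := hX.isProbabilityMeasure
  have := hY.isProbabilityMeasure
  have (i : ι) : IsProbabilityMeasure (μ.map (X i)) :=
    isProbabilityMeasure_map (hXm i).aemeasurable
  have (i : ι) : IsProbabilityMeasure (ν.map (Y i)) :=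
    isProbabilityMeasure_map (hYm i).aemeasurable
  have hpair (i : ι) : (μ.prod ν).map (fun ω ↦ (X i ω.1, Y i ω.2)) =
      (μ.map (X i)).prod (ν.map (Y i)) := map_prod_map _ _ (hXm i) (hYm i) |>.symm
  have hsplit : (fun ω : Ω × Ω' ↦ fun i ↦ (X i ω.1, Y i ω.2)) =
      (fun x i ↦ (x.1 i, x.2 i)) ∘ Prod.map (fun ω i ↦ X i ω) (fun ω i ↦ Y i ω) := rfl
  rw [iIndepFun_iff_map_fun_eq_infinitePi_map (fun i ↦ by fun_prop), hsplit,
    ← map_map (by fun_prop) (by fun_prop), ← map_prod_map _ _ (by fun_prop) (by fun_prop),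
    hX.map_fun_eq_infinitePi_map hXm, hY.map_fun_eq_infinitePi_map hYm,
    infinitePi_prod_infinitePi_map_zip]
  simp_rw [hpair]

end InfinitePiProd

theorem Set.Infinite.exists_infinite_image {α ι : Type*} [Finite ι] {β : ι → Type*}
    {s : Set α} (hs : s.Infinite) {φ : ∀ i, α → β i} (hφ : Function.Injective fun a i ↦ φ i a) :
    ∃ i, (φ i '' s).Infinite := by
  by_contra! h
  refine hs (((Set.Finite.pi h).subset ?_).of_finite_image hφ.injOn)
  rintro _ ⟨a, ha, rfl⟩ i -
  exact ⟨a, ha, rfl⟩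

namespace BernoulliHyperplane

open unitInterval

variable {n : ℕ}

theorem clusterIn_mono {S : Set (Fin n → ℤ)} {good good' : (Fin n → ℤ) → Prop}
    (h : ∀ v, good v → good' v) (x : Fin n → ℤ) : clusterIn S good x ⊆ clusterIn S good' x :=
  fun _ ⟨⟨hxS, hx⟩, hpath⟩ ↦
    ⟨⟨hxS, h x hx⟩,
      Relation.ReflTransGen.mono (fun _ w ⟨hadj, hwS, hw⟩ ↦ ⟨hadj, hwS, h w hw⟩) _ _ hpath⟩

section SitePercolation

variable {d : ℕ} {Ω : Type} [MeasurableSpace Ω] {μ : Measure Ω} {f : (Fin d → ℤ) → Ω → Bool}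

theorem IsBernoulliField.measure_clusterIn_infinite_eq_zero_of_nonpos {p : ℝ}
    (hf : IsBernoulliField d p μ f) (hp : p ≤ 0) :
    μ {a | (clusterIn Set.univ (fun v ↦ f v a = true) 0).Infinite} = 0 := by
  refine measure_mono_null (fun a ha ↦ ?_) (t := {a | f 0 a = true}) ?_
  · obtain ⟨_, ⟨_, h0⟩, _⟩ := ha.nonempty
    exact h0
  · rw [hf.2.2.2 0, ENNReal.ofReal_eq_zero.2 hp]

theorem exists_lt_le_one_of_lt_pcSite {p : ℝ} (hp : p < pcSite d) :
    ∃ q, p < q ∧ q ≤ 1 ∧ ∀ (Ω : Type) (_ : MeasurableSpace Ω) (μ : Measure Ω)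
      (f : (Fin d → ℤ) → Ω → Bool), IsBernoulliField d q μ f →
        μ {a | (clusterIn Set.univ (fun v ↦ f v a = true) 0).Infinite} = 0 := by
  have hzero : (0 : ℝ) ∈ {q : ℝ | q ∈ Set.Icc (0 : ℝ) 1 ∧ ∀ (Ω : Type) (_ : MeasurableSpace Ω)
      (μ : Measure Ω) (f : (Fin d → ℤ) → Ω → Bool), IsBernoulliField d q μ f →
        μ {a | (clusterIn Set.univ (fun v ↦ f v a = true) 0).Infinite} = 0} :=
    ⟨⟨le_rfl, zero_le_one⟩,
      fun _ _ _ _ hf ↦ hf.measure_clusterIn_infinite_eq_zero_of_nonpos le_rfl⟩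
  obtain ⟨q, ⟨⟨-, hq1⟩, hq⟩, hpq⟩ := exists_lt_of_lt_csSup ⟨0, hzero⟩ hp
  exact ⟨q, hpq, hq1, hq⟩

theorem IsBernoulliField.or_noise {p : ℝ} (hf : IsBernoulliField d p μ f) (hp0 : 0 ≤ p)
    (hp1 : p ≤ 1) (r : I) :
    IsBernoulliField d (p + (1 - p) * r)
      (μ.prod (infinitePi fun _ ↦ bernoulliMeasure true false r)) (fun v ω ↦ f v ω.1 || ω.2 v) := by
  obtain ⟨hprob, hmeas, hind, hmarg⟩ := hf
  set ν : Measure ((Fin d → ℤ) → Bool) := infinitePi fun _ ↦ bernoulliMeasure true false r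
  have hg : ∀ v, Measurable fun ω : Ω × ((Fin d → ℤ) → Bool) ↦ f v ω.1 || ω.2 v :=
    fun v ↦ by have := hmeas v; fun_prop
  refine ⟨inferInstance, hg, ?_, fun v ↦ ?_⟩
  · have hpairs := hind.prodMk_prod hmeas (fun v ↦ measurable_pi_apply v)
      (iIndepFun_infinitePi (P := fun _ ↦ bernoulliMeasure true false r) (X := fun _ b ↦ b)
        fun _ ↦ measurable_id)
    exact hpairs.comp (fun _ x ↦ x.1 || x.2) fun _ ↦ by fun_prop
  have hf_false : μ {a | f v a = false} = ENNReal.ofReal (1 - p) := by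
    have htrue : MeasurableSet {a | f v a = true} := hmeas v (measurableSet_singleton true)
    have : {a | f v a = false} = {a | f v a = true}ᶜ := by ext; simp
    rw [this, prob_compl_eq_one_sub htrue, hmarg v,
      ← ENNReal.ofReal_one, ← ENNReal.ofReal_sub _ hp0]
  have hnoise_false : ν {ξ | ξ v = false} = ENNReal.ofReal (1 - r) := by
    rw [show {ξ : (Fin d → ℤ) → Bool | ξ v = false} = Function.eval v ⁻¹' ({false} : Set Bool)
        from rfl,
      (measurePreserving_eval_infinitePi _ v).measure_preimage
        (measurableSet_singleton _).nullMeasurableSet,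
      bernoulliMeasure_apply_of_notMem_of_mem _ (measurableSet_singleton _) (by simp) rfl,
      ← ENNReal.ofReal_coe_nnreal, coe_toNNReal, coe_symm_eq]
  have hfalse : {ω : Ω × ((Fin d → ℤ) → Bool) | (f v ω.1 || ω.2 v) = true} =
      ({a | f v a = false} ×ˢ {ξ | ξ v = false})ᶜ := by
    ext ω; simp [or_iff_not_imp_left]
  rw [hfalse, prob_compl_eq_one_sub, prod_prod, hf_false, hnoise_false,
    ← ENNReal.ofReal_mul (by linarith), ← ENNReal.ofReal_one,
    ← ENNReal.ofReal_sub _ (mul_nonneg (by linarith) (by linarith [r.2.2]))]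
  · congr 1; ring
  · exact (hmeas v (measurableSet_singleton false)).prod
      (measurableSet_eq_fun (measurable_pi_apply v) measurable_const)

theorem IsBernoulliField.measure_clusterIn_infinite_eq_zero {p : ℝ}
    (hf : IsBernoulliField d p μ f) (hp : p < pcSite d) :
    μ {a | (clusterIn Set.univ (fun v ↦ f v a = true) 0).Infinite} = 0 := by
  rcases le_or_gt p 0 with hp0 | hp0
  · exact hf.measure_clusterIn_infinite_eq_zero_of_nonpos hp0
  obtain ⟨q, hpq, hq1, hq⟩ := exists_lt_le_one_of_lt_pcSite hp
  let r : I := ⟨(q - p) / (1 - p), div_nonneg (by linarith) (by linarith),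
    (div_le_one (by linarith)).2 (by linarith)⟩
  have hr : p + (1 - p) * r = q := by
    have : 1 - p ≠ 0 := by linarith
    simp only [r]; field_simp; ring
  have hcoupled := hq _ _ _ _ (hr ▸ hf.or_noise hp0.le (by linarith) r)
  have hsub : {a | (clusterIn Set.univ (fun v ↦ f v a = true) 0).Infinite} ×ˢ Set.univ ⊆
      {ω : Ω × ((Fin d → ℤ) → Bool) |
        (clusterIn Set.univ (fun v ↦ (f v ω.1 || ω.2 v) = true) 0).Infinite} :=
    fun ω ⟨hω, _⟩ ↦ hω.mono (clusterIn_mono (fun v hv ↦ by simp [hv]) 0)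
  simpa using measure_mono_null hsub hcoupled

end SitePercolation

section Blocks

variable {k : ℕ} {J : Finset (Fin n)}

noncomputable def restrictBlock (hJ : J.card = k) (u : Fin n → ℤ) : Fin k → ℤ :=
  fun i ↦ u ((J.equivFinOfCardEq hJ).symm i)

noncomputable def extendBlock (hJ : J.card = k) (w : Fin k → ℤ) : Fin n → ℤ :=
  fun i ↦ if h : i ∈ J then w (J.equivFinOfCardEq hJ ⟨i, h⟩) else 0

theorem extendBlock_of_notMem (hJ : J.card = k) (w : Fin k → ℤ) {i : Fin n} (hi : i ∉ J) :
    extendBlock hJ w i = 0 :=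
  dif_neg hi

theorem extendBlock_restrictBlock (hJ : J.card = k) (u : Fin n → ℤ) :
    extendBlock hJ (restrictBlock hJ u) = proj J u := by
  funext i
  by_cases h : i ∈ J <;> simp [extendBlock, restrictBlock, proj, h]

theorem restrictBlock_extendBlock (hJ : J.card = k) (w : Fin k → ℤ) :
    restrictBlock hJ (extendBlock hJ w) = w := by
  funext i
  simp [extendBlock, restrictBlock]

theorem extendBlock_injective (hJ : J.card = k) : Function.Injective (extendBlock hJ) :=
  Function.LeftInverse.injective (restrictBlock_extendBlock hJ)

theorem restrictBlock_eq_iff (hJ : J.card = k) {u w : Fin n → ℤ} :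
    restrictBlock hJ u = restrictBlock hJ w ↔ ∀ i ∈ J, u i = w i := by
  refine ⟨fun h i hi ↦ ?_, fun h ↦ funext fun i ↦ h _ (Finset.coe_mem _)⟩
  simpa [restrictBlock] using congrFun h (J.equivFinOfCardEq hJ ⟨i, hi⟩)

theorem sum_abs_sub_restrictBlock (hJ : J.card = k) (u w : Fin n → ℤ) :
    ∑ i, |restrictBlock hJ u i - restrictBlock hJ w i| = ∑ i ∈ J, |u i - w i| := by
  rw [← Finset.sum_coe_sort J]
  exact Equiv.sum_comp (J.equivFinOfCardEq hJ).symm fun i : J ↦ |u i - w i|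

theorem restrictBlock_eq_or_latAdj (hJ : J.card = k) {u w : Fin n → ℤ} (h : latAdj u w) :
    restrictBlock hJ u = restrictBlock hJ w ∨
      latAdj (restrictBlock hJ u) (restrictBlock hJ w) := by
  have hle : ∑ i ∈ J, |u i - w i| ≤ 1 :=
    h ▸ Finset.sum_le_sum_of_subset_of_nonneg J.subset_univ fun i _ _ ↦ abs_nonneg _
  rcases (Finset.sum_nonneg fun i _ ↦ abs_nonneg (u i - w i)).eq_or_lt with h0 | h1
  · left
    rw [restrictBlock_eq_iff]
    intro i hi
    have := (Finset.sum_eq_zero_iff_of_nonneg fun i _ ↦ abs_nonneg (u i - w i)).1 h0.symm i hi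
    exact sub_eq_zero.1 (abs_eq_zero.1 this)
  · right
    rw [latAdj, sum_abs_sub_restrictBlock]
    omega

theorem restrictBlock_image_clusterIn_subset (hJ : J.card = k)
    (f : Finset (Fin n) → (Fin n → ℤ) → Bool) :
    restrictBlock hJ '' clusterIn Set.univ (hpOpen k f) 0 ⊆
      clusterIn Set.univ (fun w ↦ f J (extendBlock hJ w) = true) 0 := by
  have hopen : ∀ u, hpOpen k f u → f J (extendBlock hJ (restrictBlock hJ u)) = true :=
    fun u hu ↦ (extendBlock_restrictBlock hJ u).symm ▸ hu J hJ
  rintro _ ⟨u, ⟨⟨-, h0⟩, hpath⟩, rfl⟩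
  induction hpath with
  | refl => exact ⟨⟨trivial, hopen 0 h0⟩, .refl⟩
  | tail _ hstep ih =>
    obtain ⟨hadj, -, hw⟩ := hstep
    rcases restrictBlock_eq_or_latAdj hJ hadj with heq | hadj'
    · exact heq ▸ ih
    · exact ⟨ih.1, ih.2.tail ⟨hadj', trivial, hopen _ hw⟩⟩

theorem IsHyperplanePercolation.isBernoulliField_block {p : Finset (Fin n) → ℝ} {Ω : Type}
    [MeasurableSpace Ω] {μ : Measure Ω} {F : Finset (Fin n) → (Fin n → ℤ) → Ω → Bool}
    (hF : IsHyperplanePercolation n k p μ F) (hJ : J.card = k) :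
    IsBernoulliField k (p J) μ fun w ↦ F J (extendBlock hJ w) := by
  obtain ⟨hprob, hmeas, hind, hmarg⟩ := hF
  let site : (Fin k → ℤ) →
      {q : Finset (Fin n) × (Fin n → ℤ) // q.1.card = k ∧ ∀ i ∉ q.1, q.2 i = 0} :=
    fun w ↦ ⟨(J, extendBlock hJ w), hJ, fun _ ↦ extendBlock_of_notMem hJ w⟩
  have hsite : Function.Injective site := fun w w' h ↦
    extendBlock_injective hJ (congrArg (fun q ↦ q.1.2) h)
  exact ⟨hprob, fun w ↦ hmeas _ _, hind.precomp hsite,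
    fun w ↦ hmarg J hJ _ fun _ ↦ extendBlock_of_notMem hJ w⟩

end Blocks

theorem subcritical_partition_general (n k l : ℕ)
    (P : Fin l → Finset (Fin n)) (hcard : ∀ j, (P j).card = k)
    (hcover : ∀ i : Fin n, ∃ j, i ∈ P j)
    (p : Finset (Fin n) → ℝ) (Ω : Type) [MeasurableSpace Ω] (μ : Measure Ω)
    (F : Finset (Fin n) → (Fin n → ℤ) → Ω → Bool)
    (hperc : IsHyperplanePercolation n k p μ F)
    (hsub : ∀ j, p (P j) < pcSite k) :
    μ {a | (clusterIn Set.univ (hpOpen k (fun J v => F J v a)) 0).Finite} = 1 := by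
  have := hperc.1
  have hblocks : Function.Injective fun u j ↦ restrictBlock (hcard j) u := fun u w h ↦ funext
    fun i ↦ (hcover i).elim fun j hj ↦ (restrictBlock_eq_iff (hcard j)).1 (congrFun h j) i hj
  have hinfinite : {a | ¬(clusterIn Set.univ (hpOpen k (fun J v => F J v a)) 0).Finite} ⊆
      ⋃ j, {a | (clusterIn Set.univ
        (fun w ↦ F (P j) (extendBlock (hcard j) w) a = true) 0).Infinite} := by
    intro a ha
    obtain ⟨j, hj⟩ := Set.Infinite.exists_infinite_image ha hblocks
    exact Set.mem_iUnion.2 ⟨j, hj.mono (restrictBlock_image_clusterIn_subset (hcard j) _)⟩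
  have hnull := measure_mono_null hinfinite <| measure_iUnion_null fun j ↦
    (hperc.isBernoulliField_block (hcard j)).measure_clusterIn_infinite_eq_zero (hsub j)
  exact (measure_congr (ae_eq_univ.2 hnull)).trans measure_univ

/-- if `k` divides `n = l·k` with `l ≥ 2` and `[n]` is partitioned into `l`
blocks `P 0, …, P (l-1)` of size `k` with `p_{P j} < p_c(ℤᵏ)` for every `j` (the remaining
parameters being arbitrary), then the open cluster of the origin is finite almost surely. -/
theorem subcritical_partition (n k l : ℕ) (hk2 : 2 ≤ k) (hl : 2 ≤ l) (hn : n = l * k)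
    (P : Fin l → Finset (Fin n)) (hcard : ∀ j, (P j).card = k)
    (hdisj : ∀ i j, i ≠ j → Disjoint (P i) (P j))
    (hcover : ∀ i : Fin n, ∃ j, i ∈ P j)
    (p : Finset (Fin n) → ℝ) (Ω : Type) [MeasurableSpace Ω] (μ : Measure Ω)
    (F : Finset (Fin n) → (Fin n → ℤ) → Ω → Bool)
    (hperc : IsHyperplanePercolation n k p μ F)
    (hsub : ∀ j, p (P j) < pcSite k) :
    μ {a | (clusterIn Set.univ (hpOpen k (fun J v => F J v a)) 0).Finite} = 1 :=
  subcritical_partition_general n k l P hcard hcover p Ω μ F hperc hsub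

end BernoulliHyperplane
end

section
/- Let n ≥ 3, k = 2, and let B = ([0,N] × [0,m_2] × ... × [0,m_n]) ∩ ℤ^n. Set I_j = {1,j} for 2 ≤ j ≤ n. For each j, let γ_j : {0,...,H_j} → π_{I_j}(B) be a nearest-neighbor path of ω_{I_j}-open sites with first coordinate 0 at time 0, first coordinate N at time H_j, and first coordinate < N at all times t < H_j. Then there exists a nearest-neighbor path λ : {0,...,T} → B all of whose sites are ω_{I_j}-open for every 2 ≤ j ≤ n, with π_{I_j}(λ(0)) = γ_j(0) and π_{I_j}(λ(T)) = γ_j(H_j) for each j. In particular, if each projected rectangle π_{I_j}(B) has a bottom-to-top crossing of ω_{I_j}-open sites, then B has a bottom-to-top crossing (in the first coordinate) of sites that are ω_{I_j}-open for every 2 ≤ j ≤ n. -/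
namespace BernoulliHyperplane

variable {n : ℕ}

/-! Write `g_j(t)` for the first coordinate of `γ_j(t)`. Each `g_j` is a lazy walk from `0` to `N`
(steps in `{-1, 0, 1}`) that stays in `[0, N)` before its last time. Such walks can be synchronized
(the mountain climbers' problem): there are reparametrizations `τ_j`, each moving by at most one
step at a time, along which all the `g_j ∘ τ_j` coincide. For strict walks this is the parity
argument in the graph of pairs of times at equal height, whose only odd-degree vertices are the
start and the end; lazy walks reduce to strict ones by doubling time and height, and the walkers
are added one at a time. At a synchronized time, the site with first coordinate the common height
and `j`-th coordinate that of `γ_j(τ_j)` projects onto `γ_j(τ_j)` in every plane `I_j`; two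
consecutive such sites span a unit cube all of whose sites are open, and a monotone
nearest-neighbour path crosses it. -/

theorem _root_.SimpleGraph.exists_ne_reachable_odd_degree_s11 {V : Type*} {G : SimpleGraph V}
    [Fintype V] [DecidableRel G.Adj] {u : V} (hu : Odd (G.degree u)) :
    ∃ v, v ≠ u ∧ Odd (G.degree v) ∧ G.Reachable u v := by
  classical
  let s : Set V := {v | G.Reachable u v}
  have hs : ∀ v : s, G.neighborSet v ⊆ s := fun v _ hw => v.2.trans hw.reachable
  obtain ⟨w, hne, hodd⟩ := (G.induce s).exists_ne_odd_degree_of_exists_odd_degree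
    ⟨u, .refl u⟩ (by rwa [SimpleGraph.degree_induce_of_neighborSet_subset (hs _)])
  rw [SimpleGraph.degree_induce_of_neighborSet_subset (hs w)] at hodd
  exact ⟨w, fun h => hne (Subtype.ext h), hodd, w.2⟩

theorem _root_.Relation.ReflTransGen.exists_seq {α : Type*} {R : α → α → Prop} {x y : α}
    (h : Relation.ReflTransGen R x y) :
    ∃ (T : ℕ) (f : ℕ → α), f 0 = x ∧ f T = y ∧ ∀ t < T, R (f t) (f (t + 1)) := by
  induction h using Relation.ReflTransGen.head_induction_on with
  | refl => exact ⟨0, fun _ => y, rfl, rfl, by simp⟩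
  | @head x z hxz _ ih =>
    obtain ⟨T, f, hf0, hfT, hf⟩ := ih
    refine ⟨T + 1, fun t => if t = 0 then x else f (t - 1), by simp, by simp [hfT], ?_⟩
    rintro (_ | t) ht
    · simpa [hf0] using hxz
    · simpa using hf t (by omega)

structure IsClimb (N : ℤ) (K : ℕ) (a : ℕ → ℤ) : Prop where
  zero : a 0 = 0
  last : a K = N
  nonneg : ∀ i ≤ K, 0 ≤ a i
  lt : ∀ i < K, a i < N
  step : ∀ i < K, |a (i + 1) - a i| ≤ 1

structure IsStrictClimb (N : ℤ) (K : ℕ) (a : ℕ → ℤ) : Prop extends IsClimb N K a where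
  ne : ∀ i < K, a (i + 1) ≠ a i

structure IsReparam (L K : ℕ) (p : ℕ → ℕ) : Prop where
  zero : p 0 = 0
  last : p L = K
  lt : ∀ r < L, p r < K
  step : ∀ r < L, p (r + 1) ≤ p r + 1 ∧ p r ≤ p (r + 1) + 1

namespace IsReparam

variable {L K S : ℕ} {p q : ℕ → ℕ}

theorem step_cases (hp : IsReparam L K p) {r : ℕ} (hr : r < L) :
    p (r + 1) = p r + 1 ∨ p (r + 1) = p r ∨ p r = p (r + 1) + 1 := by
  have := hp.step r hr
  omega

theorem le (hp : IsReparam L K p) {r : ℕ} (hr : r ≤ L) : p r ≤ K := by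
  rcases hr.lt_or_eq with hr | rfl
  · exact (hp.lt r hr).le
  · exact hp.last.le

theorem comp (hp : IsReparam S K p) (hq : IsReparam L S q) : IsReparam L K (p ∘ q) where
  zero := by simp [hq.zero, hp.zero]
  last := by simp [hq.last, hp.last]
  lt r hr := hp.lt _ (hq.lt r hr)
  step r hr := by
    have hqr := hq.lt r hr
    rcases hq.step_cases hr with h | h | h
    · have := hp.step (q r) hqr
      simp only [Function.comp, h]; omega
    · simp [h]
    · have := hp.step (q (r + 1)) (by omega)
      simp only [Function.comp, h]; omega

theorem mod_two_eq (hp : IsReparam L K p) (hne : ∀ r < L, p (r + 1) ≠ p r) :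
    ∀ r ≤ L, p r % 2 = r % 2 := by
  intro r hr
  induction r with
  | zero => simp [hp.zero]
  | succ r ih =>
    have := ih (by omega)
    have := hp.step r (by omega)
    have := hne r (by omega)
    omega

theorem half (hp : IsReparam L (2 * K) p) (hpar : ∀ r ≤ L, p r % 2 = r % 2) :
    IsReparam (L / 2) K (fun r => p (2 * r) / 2) where
  zero := by simp [hp.zero]
  last := by
    have hL := hpar L le_rfl
    rw [hp.last] at hL
    rw [show 2 * (L / 2) = L by omega, hp.last]
    omega
  lt r hr := by
    have := hp.lt (2 * r) (by omega)
    omega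
  step r hr := by
    have := hp.step (2 * r) (by omega)
    have := hp.step (2 * r + 1) (by omega)
    have := hpar (2 * r) (by omega)
    have := hpar (2 * r + 1 + 1) (by omega)
    rw [show 2 * (r + 1) = 2 * r + 1 + 1 by ring]
    omega

end IsReparam

namespace IsClimb

variable {N : ℤ} {K L : ℕ} {a : ℕ → ℤ}

theorem le (ha : IsClimb N K a) {i : ℕ} (hi : i ≤ K) : a i ≤ N := by
  rcases hi.lt_or_eq with hi | rfl
  · exact (ha.lt i hi).le
  · exact ha.last.le

theorem eq_of_eq (ha : IsClimb N K a) {i : ℕ} (hi : i ≤ K) (h : a i = N) : i = K := by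
  by_contra hne
  exact (ha.lt i (by omega)).ne h

theorem comp {q : ℕ → ℕ} (ha : IsClimb N K a) (hq : IsReparam L K q) : IsClimb N L (a ∘ q) where
  zero := by simp [hq.zero, ha.zero]
  last := by simp [hq.last, ha.last]
  nonneg r hr := ha.nonneg _ (hq.le hr)
  lt r hr := ha.lt _ (hq.lt r hr)
  step r hr := by
    have hqr := hq.lt r hr
    rcases hq.step_cases hr with h | h | h
    · simpa [h] using ha.step (q r) hqr
    · simp [h]
    · simpa [h, abs_sub_comm] using ha.step (q (r + 1)) (by omega)

end IsClimb

/-- Doubling time and height turns a flat step `x → x` into the spike `2x → 2x + 1 → 2x`, and a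
step `x → x ± 1` into two steps, so that the doubled walk never rests. -/
def double (a : ℕ → ℤ) (t : ℕ) : ℤ :=
  if t % 2 = 0 then 2 * a (t / 2) else 2 * min (a (t / 2)) (a (t / 2 + 1)) + 1

theorem double_two_mul (a : ℕ → ℤ) (i : ℕ) : double a (2 * i) = 2 * a i := by
  simp [double]

theorem double_two_mul_add_one (a : ℕ → ℤ) (i : ℕ) :
    double a (2 * i + 1) = 2 * min (a i) (a (i + 1)) + 1 := by
  rw [double, if_neg (by omega), show (2 * i + 1) / 2 = i by omega]

theorem double_succ_ne (a : ℕ → ℤ) (t : ℕ) : double a (t + 1) ≠ double a t := by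
  obtain ⟨i, rfl | rfl⟩ := Nat.even_or_odd' t
  · rw [double_two_mul_add_one, double_two_mul]
    omega
  · rw [show 2 * i + 1 + 1 = 2 * (i + 1) by ring, double_two_mul, double_two_mul_add_one]
    omega

theorem IsClimb.double {N : ℤ} {K : ℕ} {a : ℕ → ℤ} (ha : IsClimb N K a) :
    IsStrictClimb (2 * N) (2 * K) (double a) where
  zero := by simpa [ha.zero] using double_two_mul a 0
  last := by rw [double_two_mul, ha.last]
  nonneg t ht := by
    obtain ⟨i, rfl | rfl⟩ := Nat.even_or_odd' t
    · rw [double_two_mul]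
      have := ha.nonneg i (by omega)
      omega
    · rw [double_two_mul_add_one]
      have := ha.nonneg i (by omega)
      have := ha.nonneg (i + 1) (by omega)
      omega
  lt t ht := by
    obtain ⟨i, rfl | rfl⟩ := Nat.even_or_odd' t
    · rw [double_two_mul]
      have := ha.lt i (by omega)
      omega
    · rw [double_two_mul_add_one]
      have := ha.lt i (by omega)
      omega
  step t ht := by
    obtain ⟨i, rfl | rfl⟩ := Nat.even_or_odd' t
    · have := abs_le.mp (ha.step i (by omega))
      rw [double_two_mul_add_one, double_two_mul, abs_le]
      omega
    · have := abs_le.mp (ha.step i (by omega))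
      rw [show 2 * i + 1 + 1 = 2 * (i + 1) by ring, double_two_mul, double_two_mul_add_one,
        abs_le]
      omega
  ne t _ := double_succ_ne a t

section LevelGraph

open Finset

variable {N : ℤ} {a b : ℕ → ℤ} {K Ka Kb : ℕ}

def levelGraph (a b : ℕ → ℤ) (Ka Kb : ℕ) : SimpleGraph (Fin (Ka + 1) × Fin (Kb + 1)) where
  Adj u v := a u.1 = b u.2 ∧ a v.1 = b v.2 ∧ ((u.1 : ℕ) + 1 = v.1 ∨ (v.1 : ℕ) + 1 = u.1) ∧
    ((u.2 : ℕ) + 1 = v.2 ∨ (v.2 : ℕ) + 1 = u.2)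
  symm := ⟨fun _ _ h => ⟨h.2.1, h.1, h.2.2.1.symm, h.2.2.2.symm⟩⟩
  loopless := ⟨fun _ h => by omega⟩

@[simp]
theorem levelGraph_adj {u v : Fin (Ka + 1) × Fin (Kb + 1)} :
    (levelGraph a b Ka Kb).Adj u v ↔ a u.1 = b u.2 ∧ a v.1 = b v.2 ∧
      ((u.1 : ℕ) + 1 = v.1 ∨ (v.1 : ℕ) + 1 = u.1) ∧ ((u.2 : ℕ) + 1 = v.2 ∨ (v.2 : ℕ) + 1 = u.2) :=
  Iff.rfl

instance : DecidableRel (levelGraph a b Ka Kb).Adj :=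
  fun _ _ => by simp only [levelGraph]; infer_instance

def stepsBy (a : ℕ → ℤ) (K : ℕ) (i : Fin (K + 1)) (d : ℤ) : Finset (Fin (K + 1)) :=
  {j | ((i : ℕ) + 1 = j ∨ (j : ℕ) + 1 = i) ∧ a j = a i + d}

theorem IsStrictClimb.eq_add_one_or_sub_one (ha : IsStrictClimb N K a) {i j : ℕ} (hi : i ≤ K)
    (hj : j ≤ K) (hij : i + 1 = j ∨ j + 1 = i) : a j = a i + 1 ∨ a j = a i - 1 := by
  rcases hij with rfl | rfl
  · have := abs_le.mp (ha.step i (by omega))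
    have := ha.ne i (by omega)
    omega
  · have := abs_le.mp (ha.step j (by omega))
    have := ha.ne j (by omega)
    omega

theorem disjoint_stepsBy (i : Fin (K + 1)) : Disjoint (stepsBy a K i 1) (stepsBy a K i (-1)) := by
  simp only [Finset.disjoint_left, stepsBy, Finset.mem_filter, Finset.mem_univ, true_and]
  omega

theorem degree_levelGraph (ha : IsStrictClimb N Ka a) (hb : IsStrictClimb N Kb b)
    {i : Fin (Ka + 1)} {k : Fin (Kb + 1)} (hik : a i = b k) :
    (levelGraph a b Ka Kb).degree (i, k) = #(stepsBy a Ka i 1) * #(stepsBy b Kb k 1) +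
      #(stepsBy a Ka i (-1)) * #(stepsBy b Kb k (-1)) := by
  have hnbr : (levelGraph a b Ka Kb).neighborFinset (i, k) =
      stepsBy a Ka i 1 ×ˢ stepsBy b Kb k 1 ∪ stepsBy a Ka i (-1) ×ˢ stepsBy b Kb k (-1) := by
    ext ⟨j, l⟩
    simp only [SimpleGraph.mem_neighborFinset, levelGraph_adj, stepsBy, Finset.mem_union,
      Finset.mem_product, Finset.mem_filter, Finset.mem_univ, true_and]
    constructor
    · rintro ⟨-, hjl, hij, hkl⟩
      have := ha.eq_add_one_or_sub_one (by omega) (by omega) hij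
      have := hb.eq_add_one_or_sub_one (by omega) (by omega) hkl
      omega
    · rintro (⟨⟨hij, hj⟩, hkl, hl⟩ | ⟨⟨hij, hj⟩, hkl, hl⟩) <;> exact ⟨hik, by omega, hij, hkl⟩
  rw [← SimpleGraph.card_neighborFinset_eq_degree, hnbr,
    Finset.card_union_of_disjoint (Finset.disjoint_product.mpr (.inl (disjoint_stepsBy i))),
    Finset.card_product, Finset.card_product]

theorem card_stepsBy_add_card_stepsBy (ha : IsStrictClimb N K a) {i : Fin (K + 1)}
    (hi0 : 0 < (i : ℕ)) (hiK : (i : ℕ) < K) :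
    #(stepsBy a K i 1) + #(stepsBy a K i (-1)) = 2 := by
  have hunion : stepsBy a K i 1 ∪ stepsBy a K i (-1) =
      {⟨i - 1, by omega⟩, ⟨i + 1, by omega⟩} := by
    ext j
    simp only [stepsBy, Finset.mem_union, Finset.mem_filter, Finset.mem_univ, true_and,
      Finset.mem_insert, Finset.mem_singleton, Fin.ext_iff]
    have := ha.eq_add_one_or_sub_one (i := i) (j := j) (by omega) (by omega)
    omega
  rw [← Finset.card_union_of_disjoint (disjoint_stepsBy i), hunion, Finset.card_pair]
  simp [Fin.ext_iff]

theorem stepsBy_neg_one_eq_empty (ha : ∀ j ≤ K, 0 ≤ a j) {i : Fin (K + 1)} (hi : a i = 0) :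
    stepsBy a K i (-1) = ∅ := by
  ext j
  have := ha j (by omega)
  simp only [stepsBy, Finset.mem_filter, Finset.mem_univ, true_and, Finset.notMem_empty,
    iff_false]
  omega

theorem stepsBy_zero (ha : IsStrictClimb N K a) (hK : 0 < K) :
    stepsBy a K 0 1 = {⟨1, by omega⟩} := by
  ext j
  have h1 := ha.eq_add_one_or_sub_one (i := 0) (j := 1) (by omega) hK (by omega)
  have := ha.nonneg 1 hK
  rw [ha.zero] at h1
  simp only [stepsBy, Finset.mem_filter, Finset.mem_univ, true_and, Finset.mem_singleton,
    Fin.ext_iff, Fin.val_zero, ha.zero]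
  constructor
  · omega
  · rintro hj
    rw [hj]
    omega

theorem even_mul_add_mul {x x' y y' : ℕ} (hx : x + x' = 2) (hy : y + y' = 2) :
    Even (x * y + x' * y') := by
  have hxx' : Even x ↔ Even x' := Nat.even_add.mp (by rw [hx]; decide)
  have hyy' : Even y ↔ Even y' := Nat.even_add.mp (by rw [hy]; decide)
  rw [Nat.even_add, Nat.even_mul, Nat.even_mul, hxx', hyy']

theorem card_stepsBy_one_of_eq_zero (ha : IsStrictClimb N K a) {i : Fin (K + 1)} (hi : a i = 0)
    (hi0 : 0 < (i : ℕ)) (hiK : (i : ℕ) < K) :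
    #(stepsBy a K i 1) = 2 := by
  simpa [stepsBy_neg_one_eq_empty ha.nonneg hi] using card_stepsBy_add_card_stepsBy ha hi0 hiK

theorem odd_degree_levelGraph_zero (ha : IsStrictClimb N Ka a) (hb : IsStrictClimb N Kb b)
    (hKa : 0 < Ka) (hKb : 0 < Kb) :
    Odd ((levelGraph a b Ka Kb).degree (0, 0)) := by
  rw [degree_levelGraph ha hb (by simp [ha.zero, hb.zero]), stepsBy_zero ha hKa,
    stepsBy_zero hb hKb, stepsBy_neg_one_eq_empty ha.nonneg (by simp [ha.zero]),
    stepsBy_neg_one_eq_empty hb.nonneg (by simp [hb.zero])]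
  simp

theorem eq_last_of_odd_degree_levelGraph (ha : IsStrictClimb N Ka a) (hb : IsStrictClimb N Kb b)
    {v : Fin (Ka + 1) × Fin (Kb + 1)}
    (hv : Odd ((levelGraph a b Ka Kb).degree v)) (hv0 : v ≠ (0, 0)) :
    v = (Fin.last Ka, Fin.last Kb) := by
  obtain ⟨i, k⟩ := v
  have hik : a i = b k := by
    by_contra hne
    rw [← SimpleGraph.card_neighborFinset_eq_degree, card_eq_zero.mpr (eq_empty_of_forall_notMem
      fun w hw => hne (by rw [SimpleGraph.mem_neighborFinset, levelGraph_adj] at hw; exact hw.1))]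
      at hv
    exact Nat.not_odd_zero hv
  have hi := i.is_le
  have hk := k.is_le
  by_cases hiK : (i : ℕ) = Ka
  · have hkK : (k : ℕ) = Kb := hb.eq_of_eq hk (by rw [← hik, hiK, ha.last])
    ext <;> simp [hiK, hkK]
  have hkK : (k : ℕ) ≠ Kb := fun hkK => hiK (ha.eq_of_eq hi (by rw [hik, hkK, hb.last]))
  refine absurd ?_ (Nat.not_even_iff_odd.mpr hv)
  rw [degree_levelGraph ha hb hik]
  by_cases h0 : a i = 0
  · have hbk : b k = 0 := hik ▸ h0
    simp only [stepsBy_neg_one_eq_empty ha.nonneg h0, stepsBy_neg_one_eq_empty hb.nonneg hbk,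
      card_empty, mul_zero, add_zero, Nat.even_mul]
    have hik0 : (i : ℕ) ≠ 0 ∨ (k : ℕ) ≠ 0 := by
      by_contra! h
      exact hv0 (Prod.ext (Fin.ext h.1) (Fin.ext h.2))
    rcases hik0 with hi0 | hk0
    · left
      rw [card_stepsBy_one_of_eq_zero ha h0 (by omega) (by omega)]
      decide
    · right
      rw [card_stepsBy_one_of_eq_zero hb hbk (by omega) (by omega)]
      decide
  · have hi0 : (i : ℕ) ≠ 0 := fun h => h0 (by rw [h, ha.zero])
    have hk0 : (k : ℕ) ≠ 0 := fun h => h0 (by rw [hik, h, hb.zero])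
    exact even_mul_add_mul (card_stepsBy_add_card_stepsBy ha (by omega) (by omega))
      (card_stepsBy_add_card_stepsBy hb (by omega) (by omega))

theorem reachable_levelGraph (ha : IsStrictClimb N Ka a) (hb : IsStrictClimb N Kb b) :
    (levelGraph a b Ka Kb).Reachable (0, 0) (Fin.last Ka, Fin.last Kb) := by
  rcases Nat.eq_zero_or_pos Ka with rfl | hKa
  · have hN : N = 0 := ha.last.symm.trans ha.zero
    obtain rfl : Kb = 0 := by
      by_contra h
      have := hb.lt 0 (by omega)
      rw [hb.zero, hN] at this
      exact this.false
    rfl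
  have hKb : 0 < Kb := by
    by_contra h
    have := ha.lt 0 hKa
    rw [ha.zero, ← hb.last, show Kb = 0 by omega, hb.zero] at this
    exact this.false
  obtain ⟨v, hne, hodd, hreach⟩ :=
    SimpleGraph.exists_ne_reachable_odd_degree_s11 (odd_degree_levelGraph_zero ha hb hKa hKb)
  rwa [← eq_last_of_odd_degree_levelGraph ha hb hodd hne]

theorem IsStrictClimb.exists_sync (ha : IsStrictClimb N Ka a) (hb : IsStrictClimb N Kb b) :
    ∃ (L : ℕ) (P Q : ℕ → ℕ), IsReparam L Ka P ∧ IsReparam L Kb Q ∧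
      (∀ r < L, P (r + 1) ≠ P r ∧ Q (r + 1) ≠ Q r) ∧ ∀ r ≤ L, a (P r) = b (Q r) := by
  obtain ⟨p, hp⟩ := (reachable_levelGraph ha hb).some.toPath
  have hadj : ∀ r < p.length, (levelGraph a b Ka Kb).Adj (p.getVert r) (p.getVert (r + 1)) :=
    fun r hr => p.adj_getVert_succ hr
  have hlevel : ∀ r ≤ p.length, a (p.getVert r).1 = b (p.getVert r).2 := by
    intro r hr
    rcases hr.lt_or_eq with hr | rfl
    · exact (hadj r hr).1
    · simp [p.getVert_length, ha.last, hb.last]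
  -- a path visits the end only once, and at height `N` both walks are at their end
  have hlt : ∀ r < p.length, ((p.getVert r).1 : ℕ) < Ka ∧ ((p.getVert r).2 : ℕ) < Kb := by
    intro r hr
    by_contra hend
    have h1 := (p.getVert r).1.is_le
    have h2 := (p.getVert r).2.is_le
    have h12 : ((p.getVert r).1 : ℕ) = Ka ∧ ((p.getVert r).2 : ℕ) = Kb := by
      by_cases h : ((p.getVert r).1 : ℕ) = Ka
      · exact ⟨h, hb.eq_of_eq h2 (by rw [← hlevel r hr.le, h, ha.last])⟩
      · exact ⟨ha.eq_of_eq h1 (by rw [hlevel r hr.le, show ((p.getVert r).2 : ℕ) = Kb by omega,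
          hb.last]), by omega⟩
    have := hp.getVert_injOn (show r ≤ p.length by omega)
      (show p.length ≤ p.length from le_rfl)
      (by rw [p.getVert_length]; ext <;> simp [h12])
    omega
  refine ⟨p.length, fun r => (p.getVert r).1, fun r => (p.getVert r).2,
    ⟨by simp, by simp [p.getVert_length], fun r hr => (hlt r hr).1, fun r hr => ?_⟩,
    ⟨by simp, by simp [p.getVert_length], fun r hr => (hlt r hr).2, fun r hr => ?_⟩,
    fun r hr => ?_, hlevel⟩ <;>
  · have := (hadj r hr).2.2
    beta_reduce
    omega

end LevelGraph

theorem IsClimb.exists_sync {N : ℤ} {a b : ℕ → ℤ} {Ka Kb : ℕ} (ha : IsClimb N Ka a)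
    (hb : IsClimb N Kb b) :
    ∃ (L : ℕ) (p q : ℕ → ℕ), IsReparam L Ka p ∧ IsReparam L Kb q ∧ ∀ r ≤ L, a (p r) = b (q r) := by
  obtain ⟨L, P, Q, hP, hQ, hne, hPQ⟩ := IsStrictClimb.exists_sync ha.double hb.double
  have hPpar := hP.mod_two_eq fun r hr => (hne r hr).1
  have hQpar := hQ.mod_two_eq fun r hr => (hne r hr).2
  refine ⟨L / 2, _, _, hP.half hPpar, hQ.half hQpar, fun r hr => ?_⟩
  have h := hPQ (2 * r) (by omega)
  have hPr := hPpar (2 * r) (by omega)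
  have hQr := hQpar (2 * r) (by omega)
  rw [← Nat.two_mul_div_two_of_even (Nat.even_iff.mpr (by omega) : Even (P (2 * r))),
    ← Nat.two_mul_div_two_of_even (Nat.even_iff.mpr (by omega) : Even (Q (2 * r))),
    double_two_mul, double_two_mul] at h
  omega

theorem exists_sync_of_forall_isClimb {ι : Type*} [DecidableEq ι] (N : ℕ) (K : ι → ℕ)
    (a : ι → ℕ → ℤ) (s : Finset ι) (ha : ∀ j ∈ s, IsClimb N (K j) (a j)) :
    ∃ (S : ℕ) (h : ℕ → ℤ) (τ : ℕ → ι → ℕ), IsClimb N S h ∧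
      ∀ j ∈ s, IsReparam S (K j) (fun r => τ r j) ∧ ∀ r ≤ S, a j (τ r j) = h r := by
  induction s using Finset.induction_on with
  | empty =>
    exact ⟨N, fun r => r, fun _ _ => 0,
      ⟨rfl, rfl, fun r _ => by positivity, fun r hr => by exact_mod_cast hr, by simp⟩, by simp⟩
  | insert j s hj ih =>
    obtain ⟨S, h, τ, hh, hτ⟩ := ih fun i hi => ha i (Finset.mem_insert_of_mem hi)
    obtain ⟨L, p, q, hp, hq, hpq⟩ := hh.exists_sync (ha j (Finset.mem_insert_self j s))
    refine ⟨L, h ∘ p, fun r => Function.update (τ (p r)) j (q r), hh.comp hp, fun i hi => ?_⟩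
    rcases Finset.mem_insert.mp hi with rfl | hi
    · simpa using ⟨hq, fun r hr => (hpq r hr).symm⟩
    · have hij : i ≠ j := ne_of_mem_of_not_mem hi hj
      simp only [Function.update_of_ne hij]
      exact ⟨(hτ i hi).1.comp hp, fun r hr => (hτ i hi).2 _ (hp.le hr)⟩

theorem latAdj_comm {v w : Fin n → ℤ} : latAdj v w ↔ latAdj w v := by
  simp only [latAdj, abs_sub_comm]

theorem latAdj_update {x : Fin n → ℤ} {i : Fin n} {c : ℤ} (h : |x i - c| = 1) :
    latAdj x (Function.update x i c) := by
  unfold latAdj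
  rw [Finset.sum_eq_single i (fun k _ hk => by simp [Function.update_of_ne hk]) (by simp)]
  simpa using h

theorem sum_abs_sub_le_one_of_latAdj {v : ℕ → Fin n → ℤ} {T : ℕ}
    (hv : ∀ t < T, latAdj (v t) (v (t + 1))) {t t' : ℕ} (ht : t ≤ T) (ht' : t' ≤ T)
    (h₁ : t' ≤ t + 1) (h₂ : t ≤ t' + 1) : ∑ i, |v t i - v t' i| ≤ 1 := by
  rcases (by omega : t' = t ∨ t' = t + 1 ∨ t = t' + 1) with rfl | rfl | rfl
  · simp
  · exact (hv t (by omega)).le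
  · exact (latAdj_comm.mp (hv t' (by omega))).le

theorem eq_or_eq_of_sum_abs_sub_le_one {x y z : Fin n → ℤ} (hxy : ∑ i, |x i - y i| ≤ 1)
    (hz : ∀ i, z i = x i ∨ z i = y i) : z = x ∨ z = y := by
  by_contra! h
  obtain ⟨i, hi⟩ := Function.ne_iff.mp h.1
  obtain ⟨k, hk⟩ := Function.ne_iff.mp h.2
  have hyi : z i = y i := (hz i).resolve_left hi
  have hxk : z k = x k := (hz k).resolve_right hk
  have hik : i ≠ k := by
    rintro rfl
    exact hk hyi
  have hsum := Finset.sum_le_sum_of_subset_of_nonneg (f := fun i => |x i - y i|)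
    (Finset.subset_univ {i, k}) fun _ _ _ => abs_nonneg _
  rw [Finset.sum_pair hik] at hsum
  have h₁ : 0 < |x i - y i| := abs_pos.mpr (sub_ne_zero.mpr fun h => hi (hyi.trans h.symm))
  have h₂ : 0 < |x k - y k| := abs_pos.mpr (sub_ne_zero.mpr fun h => hk (hxk.trans h))
  linarith

theorem reflTransGen_of_forall_cube {P : (Fin n → ℤ) → Prop} {x y : Fin n → ℤ}
    (hxy : ∀ i, |x i - y i| ≤ 1) (hP : ∀ z, (∀ i, z i = x i ∨ z i = y i) → P z) :
    Relation.ReflTransGen (fun u v => latAdj u v ∧ P v) x y := by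
  suffices ∀ (D : Finset (Fin n)) (x : Fin n → ℤ), (∀ i ∉ D, x i = y i) →
      (∀ i, |x i - y i| ≤ 1) → (∀ z, (∀ i, z i = x i ∨ z i = y i) → P z) →
      Relation.ReflTransGen (fun u v => latAdj u v ∧ P v) x y from
    this Finset.univ x (by simp) hxy hP
  intro D
  induction D using Finset.induction_on with
  | empty =>
    intro x hx _ _
    rw [funext fun i => hx i (Finset.notMem_empty i)]
  | insert i D hi ih =>
    intro x hx hxy hP
    set x' := Function.update x i (y i)
    have hcube : ∀ k, x' k = x k ∨ x' k = y k := by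
      intro k
      by_cases hk : k = i
      · subst hk; simp [x']
      · simp [x', Function.update_of_ne hk]
    have hx' : ∀ k ∉ D, x' k = y k := by
      intro k hk
      by_cases hki : k = i
      · subst hki; simp [x']
      · simpa [x', Function.update_of_ne hki] using hx k (by simp [hki, hk])
    have hx'y : ∀ k, |x' k - y k| ≤ 1 := fun k => by
      rcases hcube k with h | h <;> simp [h, hxy k]
    have hP' : ∀ z, (∀ k, z k = x' k ∨ z k = y k) → P z := fun z hz => hP z fun k => by
      rcases hz k with h | h
      · rcases hcube k with h' | h' <;> simp [h, h']
      · simp [h]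
    have hrest := ih x' hx' hx'y hP'
    by_cases hxi : x i = y i
    · rwa [show x' = x from Function.update_eq_self_iff.mpr hxi.symm] at hrest
    · refine .head ⟨latAdj_update ?_, hP x' hcube⟩ hrest
      exact le_antisymm (hxy i) (Int.one_le_abs (sub_ne_zero.mpr hxi))

def IsOpenInBox (e0 : Fin n) (m : Fin n → ℕ) (ω : Fin n → (Fin n → ℤ) → Bool)
    (x : Fin n → ℤ) : Prop :=
  (∀ i, 0 ≤ x i ∧ x i ≤ (m i : ℤ)) ∧ ∀ j, j ≠ e0 → ω j (proj {e0, j} x) = true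

def liftPoint (e0 : Fin n) (γ : Fin n → ℕ → Fin n → ℤ) (c : ℤ) (τ : Fin n → ℕ) : Fin n → ℤ :=
  fun i => if i = e0 then c else γ i (τ i) i

theorem proj_eq_or_eq {e0 j : Fin n} {v v' z : Fin n → ℤ} (hv : ∀ i, i ≠ e0 → i ≠ j → v i = 0)
    (hvv' : ∑ i, |v i - v' i| ≤ 1) (hz : ∀ i ∈ ({e0, j} : Finset (Fin n)), z i = v i ∨ z i = v' i) :
    proj {e0, j} z = v ∨ proj {e0, j} z = v' := by
  refine eq_or_eq_of_sum_abs_sub_le_one hvv' fun i => ?_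
  by_cases hi : i ∈ ({e0, j} : Finset (Fin n))
  · simpa [proj, hi] using hz i hi
  · simp only [Finset.mem_insert, Finset.mem_singleton, not_or] at hi
    simp [proj, hi, hv i hi.1 hi.2]

theorem proj_liftPoint {e0 j : Fin n} (hj : j ≠ e0) {γ : Fin n → ℕ → Fin n → ℤ} {c : ℤ}
    {τ : Fin n → ℕ} (hc : γ j (τ j) e0 = c) (hsupp : ∀ i, i ≠ e0 → i ≠ j → γ j (τ j) i = 0) :
    proj {e0, j} (liftPoint e0 γ c τ) = γ j (τ j) := by
  simpa using proj_eq_or_eq hsupp (v' := γ j (τ j)) (by simp) fun i hi => by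
    rcases Finset.mem_insert.mp hi with rfl | hi
    · simp [liftPoint, hc]
    · simp [Finset.mem_singleton.mp hi, liftPoint, hj]

structure IsCrossing (e0 j : Fin n) (N : ℕ) (m : Fin n → ℕ) (ω : (Fin n → ℤ) → Bool) (H : ℕ)
    (v : ℕ → Fin n → ℤ) : Prop where
  mem_box : ∀ t ≤ H, (0 ≤ v t e0 ∧ v t e0 ≤ (N : ℤ)) ∧ (0 ≤ v t j ∧ v t j ≤ (m j : ℤ)) ∧
    ∀ i, i ≠ e0 → i ≠ j → v t i = 0
  isOpen : ∀ t ≤ H, ω (v t) = true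
  adj : ∀ t < H, latAdj (v t) (v (t + 1))
  start : v 0 e0 = 0
  finish : v H e0 = N
  lt : ∀ t < H, v t e0 < N

theorem IsCrossing.isClimb {e0 j : Fin n} {N : ℕ} {m : Fin n → ℕ} {ω : (Fin n → ℤ) → Bool}
    {H : ℕ} {v : ℕ → Fin n → ℤ} (hv : IsCrossing e0 j N m ω H v) :
    IsClimb N H (fun t => v t e0) where
  zero := hv.start
  last := hv.finish
  nonneg t ht := (hv.mem_box t ht).1.1
  lt := hv.lt
  step t ht := (Finset.single_le_sum (fun i _ => abs_nonneg (v (t + 1) i - v t i))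
    (Finset.mem_univ e0)).trans (sum_abs_sub_le_one_of_latAdj hv.adj (by omega) (by omega)
      (by omega) (by omega))

section Lifting

variable {e0 : Fin n} {N : ℕ} {m : Fin n → ℕ} {ω : Fin n → (Fin n → ℤ) → Bool} {H : Fin n → ℕ}
  {γ : Fin n → ℕ → Fin n → ℤ} {c c' : ℤ} {t t' : Fin n → ℕ}

theorem isOpenInBox_of_mem_cube (hm : m e0 = N)
    (hγ : ∀ j, j ≠ e0 → IsCrossing e0 j N m (ω j) (H j) (γ j))
    (hc : 0 ≤ c ∧ c ≤ N) (hc' : 0 ≤ c' ∧ c' ≤ N)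
    (ht : ∀ j, j ≠ e0 → t j ≤ H j ∧ γ j (t j) e0 = c)
    (ht' : ∀ j, j ≠ e0 → t' j ≤ H j ∧ γ j (t' j) e0 = c')
    (htt' : ∀ j, j ≠ e0 → t' j ≤ t j + 1 ∧ t j ≤ t' j + 1) {z : Fin n → ℤ}
    (hz : ∀ i, z i = liftPoint e0 γ c t i ∨ z i = liftPoint e0 γ c' t' i) :
    IsOpenInBox e0 m ω z := by
  refine ⟨fun i => ?_, fun j hj => ?_⟩
  · rcases hz i with h | h <;> rw [h] <;> unfold liftPoint <;> split_ifs with hi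
    · exact hi ▸ hm ▸ hc
    · exact ((hγ i hi).mem_box _ (ht i hi).1).2.1
    · exact hi ▸ hm ▸ hc'
    · exact ((hγ i hi).mem_box _ (ht' i hi).1).2.1
  · have hnear := sum_abs_sub_le_one_of_latAdj (hγ j hj).adj (ht j hj).1 (ht' j hj).1
      (htt' j hj).1 (htt' j hj).2
    have hproj := proj_eq_or_eq (z := z) ((hγ j hj).mem_box _ (ht j hj).1).2.2 hnear
      fun i hi => by
        rcases Finset.mem_insert.mp hi with rfl | hi
        · simpa [liftPoint, (ht j hj).2, (ht' j hj).2] using hz i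
        · simpa [Finset.mem_singleton.mp hi, liftPoint, hj] using hz j
    rcases hproj with h | h <;> rw [h]
    · exact (hγ j hj).isOpen _ (ht j hj).1
    · exact (hγ j hj).isOpen _ (ht' j hj).1

theorem isOpenInBox_liftPoint (hm : m e0 = N)
    (hγ : ∀ j, j ≠ e0 → IsCrossing e0 j N m (ω j) (H j) (γ j)) (hc : 0 ≤ c ∧ c ≤ N)
    (ht : ∀ j, j ≠ e0 → t j ≤ H j ∧ γ j (t j) e0 = c) :
    IsOpenInBox e0 m ω (liftPoint e0 γ c t) :=
  isOpenInBox_of_mem_cube hm hγ hc hc ht ht (fun _ _ => by omega) fun _ => .inl rfl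

theorem reflTransGen_liftPoint (hm : m e0 = N)
    (hγ : ∀ j, j ≠ e0 → IsCrossing e0 j N m (ω j) (H j) (γ j))
    (hc : 0 ≤ c ∧ c ≤ N) (hc' : 0 ≤ c' ∧ c' ≤ N) (hcc' : |c' - c| ≤ 1)
    (ht : ∀ j, j ≠ e0 → t j ≤ H j ∧ γ j (t j) e0 = c)
    (ht' : ∀ j, j ≠ e0 → t' j ≤ H j ∧ γ j (t' j) e0 = c')
    (htt' : ∀ j, j ≠ e0 → t' j ≤ t j + 1 ∧ t j ≤ t' j + 1) :
    Relation.ReflTransGen (fun u v => latAdj u v ∧ IsOpenInBox e0 m ω v)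
      (liftPoint e0 γ c t) (liftPoint e0 γ c' t') := by
  refine reflTransGen_of_forall_cube (fun i => ?_)
    fun z hz => isOpenInBox_of_mem_cube hm hγ hc hc' ht ht' htt' hz
  by_cases hi : i = e0
  · simpa [liftPoint, hi, abs_sub_comm] using hcc'
  · simp only [liftPoint, hi, if_false]
    exact (Finset.single_le_sum (fun k _ => abs_nonneg (γ i (t i) k - γ i (t' i) k))
      (Finset.mem_univ i)).trans (sum_abs_sub_le_one_of_latAdj (hγ i hi).adj (ht i hi).1
        (ht' i hi).1 (htt' i hi).1 (htt' i hi).2)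

theorem reflTransGen_liftPoint_of_sync (hm : m e0 = N)
    (hγ : ∀ j, j ≠ e0 → IsCrossing e0 j N m (ω j) (H j) (γ j)) {S : ℕ} {h : ℕ → ℤ}
    {τ : ℕ → Fin n → ℕ} (hh : IsClimb N S h)
    (hτ : ∀ j, j ≠ e0 → IsReparam S (H j) (fun r => τ r j) ∧ ∀ r ≤ S, γ j (τ r j) e0 = h r) :
    Relation.ReflTransGen (fun u v => latAdj u v ∧ IsOpenInBox e0 m ω v)
      (liftPoint e0 γ (h 0) (τ 0)) (liftPoint e0 γ (h S) (τ S)) := by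
  have hhN : ∀ r ≤ S, 0 ≤ h r ∧ h r ≤ N := fun r hr => ⟨hh.nonneg r hr, hh.le hr⟩
  have hτH : ∀ r ≤ S, ∀ j, j ≠ e0 → τ r j ≤ H j ∧ γ j (τ r j) e0 = h r :=
    fun r hr j hj => ⟨(hτ j hj).1.le hr, (hτ j hj).2 r hr⟩
  suffices ∀ r ≤ S, Relation.ReflTransGen (fun u v => latAdj u v ∧ IsOpenInBox e0 m ω v)
      (liftPoint e0 γ (h 0) (τ 0)) (liftPoint e0 γ (h r) (τ r)) from this S le_rfl
  intro r hr
  induction r with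
  | zero => rfl
  | succ r ih =>
    exact (ih (by omega)).trans (reflTransGen_liftPoint hm hγ (hhN r (by omega)) (hhN (r + 1) hr)
      (hh.step r hr) (hτH r (by omega)) (hτH (r + 1) hr) fun j hj => (hτ j hj).1.step r hr)

end Lifting

theorem path_lifting_general (n : ℕ) (e0 : Fin n)
    (N : ℕ) (m : Fin n → ℕ) (hm : m e0 = N)
    (ω : Fin n → (Fin n → ℤ) → Bool)
    (H : Fin n → ℕ) (γ : Fin n → ℕ → Fin n → ℤ)
    (hbox : ∀ j, j ≠ e0 → ∀ t ≤ H j,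
      (0 ≤ γ j t e0 ∧ γ j t e0 ≤ (N : ℤ)) ∧ (0 ≤ γ j t j ∧ γ j t j ≤ (m j : ℤ)) ∧
        ∀ i, i ≠ e0 → i ≠ j → γ j t i = 0)
    (hopen : ∀ j, j ≠ e0 → ∀ t ≤ H j, ω j (γ j t) = true)
    (hadj : ∀ j, j ≠ e0 → ∀ t < H j, latAdj (γ j t) (γ j (t + 1)))
    (hstart : ∀ j, j ≠ e0 → γ j 0 e0 = 0)
    (hend : ∀ j, j ≠ e0 → γ j (H j) e0 = (N : ℤ))
    (hbelow : ∀ j, j ≠ e0 → ∀ t < H j, γ j t e0 < (N : ℤ)) :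
    ∃ (T : ℕ) (lam : ℕ → Fin n → ℤ),
      (∀ t ≤ T, (∀ i, 0 ≤ lam t i ∧ lam t i ≤ (m i : ℤ)) ∧
        ∀ j, j ≠ e0 → ω j (proj {e0, j} (lam t)) = true) ∧
      (∀ t < T, latAdj (lam t) (lam (t + 1))) ∧
      ∀ j, j ≠ e0 → proj {e0, j} (lam 0) = γ j 0 ∧ proj {e0, j} (lam T) = γ j (H j) := by
  have hγ : ∀ j, j ≠ e0 → IsCrossing e0 j N m (ω j) (H j) (γ j) := fun j hj =>
    ⟨hbox j hj, hopen j hj, hadj j hj, hstart j hj, hend j hj, hbelow j hj⟩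
  obtain ⟨S, h, τ, hh, hτ⟩ := exists_sync_of_forall_isClimb N H (fun j t => γ j t e0)
    (Finset.univ.erase e0) fun j hj => (hγ j (Finset.ne_of_mem_erase hj)).isClimb
  have hsync : ∀ j, j ≠ e0 →
      IsReparam S (H j) (fun r => τ r j) ∧ ∀ r ≤ S, γ j (τ r j) e0 = h r :=
    fun j hj => hτ j (Finset.mem_erase.mpr ⟨hj, Finset.mem_univ j⟩)
  obtain ⟨T, lam, h0, hT, hlam⟩ := (reflTransGen_liftPoint_of_sync hm hγ hh hsync).exists_seq
  refine ⟨T, lam, fun t ht => ?_, fun t ht => (hlam t ht).1, fun j hj => ⟨?_, ?_⟩⟩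
  · cases t with
    | zero =>
      exact h0 ▸ isOpenInBox_liftPoint hm hγ ⟨hh.nonneg 0 (by omega), hh.le (by omega)⟩
        fun j hj => ⟨(hsync j hj).1.le (by omega), (hsync j hj).2 0 (by omega)⟩
    | succ t => exact (hlam t ht).2
  · rw [h0, proj_liftPoint hj ((hsync j hj).2 0 (by omega))
      ((hγ j hj).mem_box _ ((hsync j hj).1.le (by omega))).2.2, (hsync j hj).1.zero]
  · rw [hT, proj_liftPoint hj ((hsync j hj).2 S le_rfl)
      ((hγ j hj).mem_box _ ((hsync j hj).1.le le_rfl)).2.2, (hsync j hj).1.last]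

/-- path lifting, k = 2: given, for each `j ≠ 1`, a bottom-to-top open
crossing `γ_j` of the projected rectangle `π_{I_j}(B)` (staying strictly below height `N`
before its final time), there is a nearest-neighbor path `λ` inside `B`, simultaneously
`ω_{I_j}`-open for all `j`, whose `I_j`-projections start at `γ_j 0` and end at
`γ_j (H j)`. -/
theorem path_lifting (n : ℕ) (hn : 3 ≤ n) (e0 : Fin n) (he0 : (e0 : ℕ) = 0)
    (N : ℕ) (m : Fin n → ℕ) (hm : m e0 = N)
    (ω : Fin n → (Fin n → ℤ) → Bool)
    (H : Fin n → ℕ) (γ : Fin n → ℕ → Fin n → ℤ)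
    (hbox : ∀ j, j ≠ e0 → ∀ t ≤ H j,
      (0 ≤ γ j t e0 ∧ γ j t e0 ≤ (N : ℤ)) ∧ (0 ≤ γ j t j ∧ γ j t j ≤ (m j : ℤ)) ∧
        ∀ i, i ≠ e0 → i ≠ j → γ j t i = 0)
    (hopen : ∀ j, j ≠ e0 → ∀ t ≤ H j, ω j (γ j t) = true)
    (hadj : ∀ j, j ≠ e0 → ∀ t < H j, latAdj (γ j t) (γ j (t + 1)))
    (hstart : ∀ j, j ≠ e0 → γ j 0 e0 = 0)
    (hend : ∀ j, j ≠ e0 → γ j (H j) e0 = (N : ℤ))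
    (hbelow : ∀ j, j ≠ e0 → ∀ t < H j, γ j t e0 < (N : ℤ)) :
    ∃ (T : ℕ) (lam : ℕ → Fin n → ℤ),
      (∀ t ≤ T, (∀ i, 0 ≤ lam t i ∧ lam t i ≤ (m i : ℤ)) ∧
        ∀ j, j ≠ e0 → ω j (proj {e0, j} (lam t)) = true) ∧
      (∀ t < T, latAdj (lam t) (lam (t + 1))) ∧
      ∀ j, j ≠ e0 → proj {e0, j} (lam 0) = γ j 0 ∧ proj {e0, j} (lam T) = γ j (H j) :=
  path_lifting_general n e0 N m hm ω H γ hbox hopen hadj hstart hend hbelow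

end BernoulliHyperplane
end
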